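/- arXiv:2306.13065 — 3 statements merged into one kernel-verified Lean document; each statement's English description precedes it below -/
import Mathlib

section
/- For n ≥ 2, the number L_n of preference lists α ∈ [n]^n with exactly n−1 lucky cars is given by L_n = 2·∑_{i=2}^n ∑_{ℓ=0}^{i−1} ℓ·(n−i+1)·(i−1)!·(n−ℓ−1)! / (i−1−ℓ)!. -/
open Finset

/-- The first unoccupied spot numbered greater than or equal to `p`, if any. -/
def nextSpot {n : ℕ} (occ : Finset (Fin n)) (p : Fin n) : Option (Fin n) :=
  if h : (Finset.univ.filter (fun s : Fin n => p ≤ s ∧ s ∉ occ)).Nonempty then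
    some ((Finset.univ.filter (fun s : Fin n => p ≤ s ∧ s ∉ occ)).min' h)
  else none

/-- The set of occupied spots after the first `k` cars have tried to park,
given the preference list `α`. -/
def occupiedAfter {n : ℕ} (α : Fin n → Fin n) : ℕ → Finset (Fin n)
  | 0 => ∅
  | k + 1 =>
    if h : k < n then
      match nextSpot (occupiedAfter α k) (α ⟨k, h⟩) with
      | some s => insert s (occupiedAfter α k)
      | none => occupiedAfter α k
    else occupiedAfter α k

/-- The spot in which car `i` parks (cars numbered `0,…,n-1` enter in order),
or `none` if car `i` is unable to park. -/
def carSpot {n : ℕ} (α : Fin n → Fin n) (i : Fin n) : Option (Fin n) :=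
  nextSpot (occupiedAfter α i.val) (α i)

/-- The number of lucky cars: cars parking exactly in their preferred spot. -/
def luckyCount {n : ℕ} (α : Fin n → Fin n) : ℕ :=
  (Finset.univ.filter (fun i : Fin n => carSpot α i = some (α i))).card

/-- `L n` is the number of preference lists in `[n]^n` with exactly `n - 1` lucky cars. -/
def luckyL (n : ℕ) : ℕ :=
  (Finset.univ.filter
    (fun α : Fin n → Fin n => (luckyCount α : ℤ) = (n : ℤ) - 1)).card

/-- The `n`th harmonic number. -/
noncomputable def H (n : ℕ) : ℝ := ∑ i ∈ Finset.Icc 1 n, (1 : ℝ) / i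

variable {n : ℕ}

lemma nextSpot_eq_some_iff {occ : Finset (Fin n)} {p s : Fin n} :
    nextSpot occ p = some s ↔ p ≤ s ∧ s ∉ occ ∧ ∀ t, p ≤ t → t < s → t ∈ occ := by
  unfold nextSpot
  split_ifs with h
  · constructor
    · intro h'
      have hs : (Finset.univ.filter (fun s : Fin n => p ≤ s ∧ s ∉ occ)).min' h = s :=
        Option.some_injective _ h'
      subst hs
      have hmem := Finset.min'_mem _ h
      simp only [Finset.mem_filter, Finset.mem_univ, true_and] at hmem
      refine ⟨hmem.1, hmem.2, fun t hpt hts => ?_⟩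
      by_contra htocc
      have hle := Finset.min'_le (Finset.univ.filter (fun s : Fin n => p ≤ s ∧ s ∉ occ)) t (Finset.mem_filter.2 ⟨Finset.mem_univ _, hpt, htocc⟩)
      exact absurd (lt_of_le_of_lt hle hts) (lt_irrefl _)
    · rintro ⟨hps, hsocc, hmin⟩
      congr 1
      apply le_antisymm
      · exact Finset.min'_le _ s (Finset.mem_filter.2 ⟨Finset.mem_univ _, hps, hsocc⟩)
      · by_contra hlt
        push_neg at hlt
        have hmem := Finset.min'_mem _ h
        simp only [Finset.mem_filter, Finset.mem_univ, true_and] at hmem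
        exact hmem.2 (hmin _ hmem.1 hlt)
  · constructor
    · intro h'; exact absurd h' (by simp)
    · rintro ⟨hps, hsocc, -⟩
      exact absurd ⟨s, Finset.mem_filter.2 ⟨Finset.mem_univ _, hps, hsocc⟩⟩ h

lemma nextSpot_eq_none_iff {occ : Finset (Fin n)} {p : Fin n} :
    nextSpot occ p = none ↔ ∀ t, p ≤ t → t ∈ occ := by
  unfold nextSpot
  split_ifs with h
  · constructor
    · intro h'; exact absurd h' (by simp)
    · intro hall
      obtain ⟨t, ht⟩ := h
      simp only [Finset.mem_filter, Finset.mem_univ, true_and] at ht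
      exact absurd (hall t ht.1) ht.2
  · constructor
    · intro _ t hpt
      by_contra htocc
      exact h ⟨t, Finset.mem_filter.2 ⟨Finset.mem_univ _, hpt, htocc⟩⟩
    · intro _; rfl

lemma nextSpot_eq_some_self {occ : Finset (Fin n)} {p : Fin n} (h : p ∉ occ) :
    nextSpot occ p = some p :=
  nextSpot_eq_some_iff.2 ⟨le_refl _, h, fun t hpt htp => absurd (lt_of_le_of_lt hpt htp) (lt_irrefl _)⟩

lemma mem_occupiedAfter {α : Fin n → Fin n} {s : Fin n} :
    ∀ {k : ℕ}, s ∈ occupiedAfter α k ↔ ∃ j : Fin n, j.val < k ∧ carSpot α j = some s := by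
  intro k
  induction k with
  | zero => simp [occupiedAfter]
  | succ k ih =>
    rw [occupiedAfter]
    split_ifs with h
    · have hcs : carSpot α ⟨k, h⟩ = nextSpot (occupiedAfter α k) (α ⟨k, h⟩) := rfl
      rcases hs : nextSpot (occupiedAfter α k) (α ⟨k, h⟩) with _ | s₀
      · simp only [hs]
        rw [ih]
        constructor
        · rintro ⟨j, hj, hjs⟩; exact ⟨j, Nat.lt_succ_of_lt hj, hjs⟩
        · rintro ⟨j, hj, hjs⟩
          rcases Nat.lt_succ_iff_lt_or_eq.1 hj with hj' | hj'
          · exact ⟨j, hj', hjs⟩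
          · exfalso
            have : j = ⟨k, h⟩ := Fin.ext hj'
            rw [this, hcs, hs] at hjs
            simp at hjs
      · simp only [hs, Finset.mem_insert]
        rw [ih]
        constructor
        · rintro (rfl | ⟨j, hj, hjs⟩)
          · exact ⟨⟨k, h⟩, Nat.lt_succ_self _, by rw [hcs, hs]⟩
          · exact ⟨j, Nat.lt_succ_of_lt hj, hjs⟩
        · rintro ⟨j, hj, hjs⟩
          rcases Nat.lt_succ_iff_lt_or_eq.1 hj with hj' | hj'
          · exact Or.inr ⟨j, hj', hjs⟩
          · have : j = ⟨k, h⟩ := Fin.ext hj'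
            rw [this, hcs, hs] at hjs
            exact Or.inl (Option.some_injective _ hjs).symm
    · rw [ih]
      constructor
      · rintro ⟨j, hj, hjs⟩; exact ⟨j, Nat.lt_succ_of_lt hj, hjs⟩
      · rintro ⟨j, hj, hjs⟩
        exact ⟨j, lt_of_lt_of_le j.isLt (Nat.le_of_not_lt h), hjs⟩

lemma carSpot_inj {α : Fin n → Fin n} {i j : Fin n} {s : Fin n}
    (hi : carSpot α i = some s) (hj : carSpot α j = some s) : i = j := by
  by_contra hne
  wlog hij : i < j generalizing i j
  · exact this hj hi (Ne.symm hne) (lt_of_le_of_ne (le_of_not_gt hij) (Ne.symm hne))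
  have hmem : s ∈ occupiedAfter α j.val := mem_occupiedAfter.2 ⟨i, hij, hi⟩
  have := (nextSpot_eq_some_iff.1 hj).2.1
  exact this hmem

lemma carSpot_eq_some_iff {α : Fin n → Fin n} {j : Fin n} {s : Fin n} :
    carSpot α j = some s ↔ s ∈ occupiedAfter α (j.val + 1) ∧ s ∉ occupiedAfter α j.val := by
  constructor
  · intro h
    exact ⟨mem_occupiedAfter.2 ⟨j, Nat.lt_succ_self _, h⟩, (nextSpot_eq_some_iff.1 h).2.1⟩
  · rintro ⟨h1, h2⟩
    obtain ⟨j', hj', hj's⟩ := mem_occupiedAfter.1 h1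
    rcases Nat.lt_succ_iff_lt_or_eq.1 hj' with h' | h'
    · exact absurd (mem_occupiedAfter.2 ⟨j', h', hj's⟩) h2
    · rwa [Fin.ext h'] at hj's

-- Part B : structure characterization
def Dset (p m : Fin n) : Finset (Fin n) :=
  Finset.univ.filter fun s => p ≤ s ∧ (p < m → s < m)

def Struct (c m : Fin n) (α : Fin n → Fin n) : Prop :=
  α c ≠ m ∧ (Finset.univ.erase c).image α = Finset.univ.erase m ∧
    ∀ j, j ≠ c → α j ∈ Dset (α c) m → j < c

instance (c m : Fin n) (α : Fin n → Fin n) : Decidable (Struct c m α) := by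
  unfold Struct; infer_instance

lemma Struct.injOn {c m : Fin n} {α : Fin n → Fin n} (h : Struct c m α) :
    Set.InjOn α ↑(Finset.univ.erase c) := by
  apply Finset.injOn_of_card_image_eq
  rw [h.2.1]
  simp

lemma Struct.ne_m {c m : Fin n} {α : Fin n → Fin n} (h : Struct c m α)
    {j : Fin n} (hj : j ≠ c) : α j ≠ m := by
  have : α j ∈ (Finset.univ.erase c).image α :=
    Finset.mem_image_of_mem _ (Finset.mem_erase.2 ⟨hj, Finset.mem_univ _⟩)
  rw [h.2.1] at this
  exact (Finset.mem_erase.1 this).1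

lemma Struct.surj {c m : Fin n} {α : Fin n → Fin n} (h : Struct c m α)
    {s : Fin n} (hs : s ≠ m) : ∃ j, j ≠ c ∧ α j = s := by
  have : s ∈ (Finset.univ.erase c).image α := by
    rw [h.2.1]; exact Finset.mem_erase.2 ⟨hs, Finset.mem_univ _⟩
  obtain ⟨j, hj, hjs⟩ := Finset.mem_image.1 this
  exact ⟨j, (Finset.mem_erase.1 hj).1, hjs⟩

lemma occupiedAfter_of_struct {c m : Fin n} {α : Fin n → Fin n} (h : Struct c m α) :
    ∀ k, k ≤ n → ∀ s, (s ∈ occupiedAfter α k ↔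
      ((∃ j : Fin n, j.val < k ∧ j ≠ c ∧ α j = s) ∨ (c.val < k ∧ α c < m ∧ s = m))) := by
  intro k
  induction k with
  | zero => intro _ s; simp [occupiedAfter]
  | succ k ih =>
    intro hk1 s
    have hk : k < n := hk1
    have ihk := ih (le_of_lt hk)
    set i : Fin n := ⟨k, hk⟩ with hi
    rw [occupiedAfter, dif_pos hk]
    by_cases hic : i = c
    · -- car i = c
      by_cases hpm : α c < m
      · -- parks at m
        have hnext : nextSpot (occupiedAfter α k) (α i) = some m := by
          rw [hic]
          apply nextSpot_eq_some_iff.2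
          refine ⟨le_of_lt hpm, ?_, ?_⟩
          · intro hmem
            rcases (ihk m).1 hmem with ⟨j, hj, hjc, hjm⟩ | ⟨hck, _, _⟩
            · exact h.ne_m hjc hjm
            · rw [← hic] at hck; exact absurd hck (lt_irrefl _)
          · intro t hpt htm
            have htne : t ≠ m := ne_of_lt htm
            obtain ⟨j, hjc, hjt⟩ := h.surj htne
            have hjlt : j < c := h.2.2 j hjc (by
              rw [hjt]
              exact Finset.mem_filter.2 ⟨Finset.mem_univ _, hpt, fun _ => htm⟩)
            apply (ihk t).2
            exact Or.inl ⟨j, by rw [← hic] at hjlt; exact hjlt, hjc, hjt⟩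
        rw [hnext]
        simp only [Finset.mem_insert]
        rw [ihk s]
        constructor
        · rintro (rfl | ⟨j, hj, hjc, hjs⟩ | ⟨hck, _, _⟩)
          · exact Or.inr ⟨by rw [← hic]; exact Nat.lt_succ_self _, hpm, rfl⟩
          · exact Or.inl ⟨j, Nat.lt_succ_of_lt hj, hjc, hjs⟩
          · exact absurd hck (by rw [← hic]; exact lt_irrefl _)
        · rintro (⟨j, hj, hjc, hjs⟩ | ⟨_, _, rfl⟩)
          · rcases Nat.lt_succ_iff_lt_or_eq.1 hj with hj' | hj'
            · exact Or.inr (Or.inl ⟨j, hj', hjc, hjs⟩)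
            · exact absurd (Fin.ext hj' : j = i) (by rw [hic]; exact hjc)
          · exact Or.inl rfl
      · -- fails to park
        have hmp : m < α c := lt_of_le_of_ne (le_of_not_gt hpm) (Ne.symm h.1)
        have hnext : nextSpot (occupiedAfter α k) (α i) = none := by
          rw [hic]
          apply nextSpot_eq_none_iff.2
          intro t hpt
          have htne : t ≠ m := by
            intro he; rw [he] at hpt; exact absurd (lt_of_lt_of_le hmp hpt) (lt_irrefl _)
          obtain ⟨j, hjc, hjt⟩ := h.surj htne
          have hjlt : j < c := h.2.2 j hjc (by
            rw [hjt]
            exact Finset.mem_filter.2 ⟨Finset.mem_univ _, hpt, fun hlt => absurd hlt hpm⟩)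
          exact (ihk t).2 (Or.inl ⟨j, by rw [← hic] at hjlt; exact hjlt, hjc, hjt⟩)
        rw [hnext, ihk s]
        constructor
        · rintro (⟨j, hj, hjc, hjs⟩ | ⟨_, hcm, _⟩)
          · exact Or.inl ⟨j, Nat.lt_succ_of_lt hj, hjc, hjs⟩
          · exact absurd hcm hpm
        · rintro (⟨j, hj, hjc, hjs⟩ | ⟨_, hcm, _⟩)
          · rcases Nat.lt_succ_iff_lt_or_eq.1 hj with hj' | hj'
            · exact Or.inl ⟨j, hj', hjc, hjs⟩
            · exact absurd (Fin.ext hj' : j = i) (by rw [hic]; exact hjc)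
          · exact absurd hcm hpm
    · -- car i ≠ c : parks at α i
      have hnotocc : α i ∉ occupiedAfter α k := by
        intro hmem
        rcases (ihk (α i)).1 hmem with ⟨j, hj, hjc, hjs⟩ | ⟨_, _, him⟩
        · have : j = i := h.injOn
            (by simp [Finset.mem_coe, Finset.mem_erase, hjc])
            (by simp [Finset.mem_coe, Finset.mem_erase, hic]) hjs
          rw [this] at hj; exact absurd hj (lt_irrefl _)
        · exact h.ne_m hic him
      rw [nextSpot_eq_some_self hnotocc]
      simp only [Finset.mem_insert]
      rw [ihk s]
      constructor
      · rintro (rfl | ⟨j, hj, hjc, hjs⟩ | ⟨hck, hcm, hsm⟩)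
        · exact Or.inl ⟨i, Nat.lt_succ_self _, hic, rfl⟩
        · exact Or.inl ⟨j, Nat.lt_succ_of_lt hj, hjc, hjs⟩
        · exact Or.inr ⟨Nat.lt_succ_of_lt hck, hcm, hsm⟩
      · rintro (⟨j, hj, hjc, hjs⟩ | ⟨hck, hcm, hsm⟩)
        · rcases Nat.lt_succ_iff_lt_or_eq.1 hj with hj' | hj'
          · exact Or.inr (Or.inl ⟨j, hj', hjc, hjs⟩)
          · exact Or.inl (by rw [← (Fin.ext hj' : j = i), hjs])
        · rcases Nat.lt_succ_iff_lt_or_eq.1 hck with hck' | hck'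
          · exact Or.inr (Or.inr ⟨hck', hcm, hsm⟩)
          · exact absurd (Fin.ext hck' : c = i) (fun he => hic he.symm)

lemma carSpot_of_struct_ne {c m : Fin n} {α : Fin n → Fin n} (h : Struct c m α)
    {j : Fin n} (hj : j ≠ c) : carSpot α j = some (α j) := by
  apply carSpot_eq_some_iff.2
  constructor
  · exact (occupiedAfter_of_struct h (j.val + 1) j.isLt (α j)).2
      (Or.inl ⟨j, Nat.lt_succ_self _, hj, rfl⟩)
  · intro hmem
    rcases (occupiedAfter_of_struct h j.val (le_of_lt j.isLt) (α j)).1 hmem with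
      ⟨j', hj', hj'c, hj's⟩ | ⟨_, _, him⟩
    · have : j' = j := h.injOn
        (by simp [Finset.mem_coe, Finset.mem_erase, hj'c])
        (by simp [Finset.mem_coe, Finset.mem_erase, hj]) hj's
      rw [this] at hj'; exact absurd hj' (lt_irrefl _)
    · exact h.ne_m hj him

lemma carSpot_of_struct_c {c m : Fin n} {α : Fin n → Fin n} (h : Struct c m α) :
    carSpot α c ≠ some (α c) := by
  intro hluck
  have hmem : α c ∈ occupiedAfter α (c.val + 1) := (carSpot_eq_some_iff.1 hluck).1
  have hnot : α c ∉ occupiedAfter α c.val := (carSpot_eq_some_iff.1 hluck).2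
  rcases (occupiedAfter_of_struct h (c.val + 1) c.isLt (α c)).1 hmem with
    ⟨j, hj, hjc, hjs⟩ | ⟨_, _, him⟩
  · -- α j = α c with j ≠ c : then j < c by order condition
    have hjlt : j < c := h.2.2 j hjc (by
      rw [hjs]
      exact Finset.mem_filter.2 ⟨Finset.mem_univ _, le_refl _, fun hlt => hlt⟩)
    exact hnot ((occupiedAfter_of_struct h c.val (le_of_lt c.isLt) (α c)).2
      (Or.inl ⟨j, hjlt, hjc, hjs⟩))
  · exact h.1 him

lemma luckyCount_of_struct {c m : Fin n} {α : Fin n → Fin n} (h : Struct c m α) :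
    luckyCount α = n - 1 := by
  unfold luckyCount
  have : Finset.univ.filter (fun i : Fin n => carSpot α i = some (α i)) =
      Finset.univ.erase c := by
    ext j
    simp only [Finset.mem_filter, Finset.mem_univ, true_and, Finset.mem_erase, and_true]
    constructor
    · intro hluck
      intro he; rw [he] at hluck; exact carSpot_of_struct_c h hluck
    · intro hj; exact carSpot_of_struct_ne h hj
  rw [this, Finset.card_erase_of_mem (Finset.mem_univ _), Finset.card_univ, Fintype.card_fin]

-- Part C : reverse direction and uniqueness

lemma struct_of_luckyCount {α : Fin n → Fin n} (hn : 1 ≤ n)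
    (h : luckyCount α = n - 1) : ∃ c m, Struct c m α := by
  classical
  -- the unlucky car
  have hcard : (Finset.univ.filter (fun i : Fin n => ¬ (carSpot α i = some (α i)))).card = 1 := by
    have := Finset.card_filter_add_card_filter_not
      (s := (Finset.univ : Finset (Fin n))) (p := fun i : Fin n => carSpot α i = some (α i))
    rw [Finset.card_univ, Fintype.card_fin] at this
    unfold luckyCount at h
    omega
  obtain ⟨c, hc⟩ := Finset.card_eq_one.1 hcard
  have hlucky : ∀ j, j ≠ c → carSpot α j = some (α j) := by
    intro j hj
    by_contra hbad
    have : j ∈ Finset.univ.filter (fun i : Fin n => ¬ (carSpot α i = some (α i))) :=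
      Finset.mem_filter.2 ⟨Finset.mem_univ _, hbad⟩
    rw [hc, Finset.mem_singleton] at this
    exact hj this
  have hunlucky : ¬ (carSpot α c = some (α c)) := by
    have : c ∈ Finset.univ.filter (fun i : Fin n => ¬ (carSpot α i = some (α i))) := by
      rw [hc]; exact Finset.mem_singleton_self _
    exact (Finset.mem_filter.1 this).2
  -- injectivity on the other cars
  have hinj : Set.InjOn α ↑(Finset.univ.erase c) := by
    intro x hx y hy hxy
    simp only [Finset.coe_erase, Set.mem_diff, Set.mem_singleton_iff] at hx hy
    have hx' := hlucky x hx.2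
    have hy' := hlucky y hy.2
    rw [hxy] at hx'
    exact carSpot_inj hx' hy'
  -- the missing value m
  have hcardim : ((Finset.univ.erase c).image α).card = n - 1 := by
    rw [Finset.card_image_of_injOn hinj, Finset.card_erase_of_mem (Finset.mem_univ _),
      Finset.card_univ, Fintype.card_fin]
  have hsd : (Finset.univ \ (Finset.univ.erase c).image α).card = 1 := by
    rw [Finset.card_sdiff_of_subset (Finset.subset_univ _), Finset.card_univ, Fintype.card_fin, hcardim]
    omega
  obtain ⟨m, hm⟩ := Finset.card_eq_one.1 hsd
  have himg : (Finset.univ.erase c).image α = Finset.univ.erase m := by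
    have h1 : (Finset.univ.erase c).image α = Finset.univ \ {m} := by
      rw [← hm, Finset.sdiff_sdiff_eq_self (Finset.subset_univ _)]
    rw [h1, ← Finset.erase_eq]
  have hnem : ∀ j, j ≠ c → α j ≠ m := by
    intro j hj he
    have : α j ∈ Finset.univ.erase m := by
      rw [← himg]; exact Finset.mem_image_of_mem _ (Finset.mem_erase.2 ⟨hj, Finset.mem_univ _⟩)
    exact (Finset.mem_erase.1 this).1 he
  -- α c ≠ m
  have hacm : α c ≠ m := by
    intro he
    apply hunlucky
    apply carSpot_eq_some_iff.2
    have hnot : α c ∉ occupiedAfter α c.val := by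
      intro hmem
      obtain ⟨j, hj, hjs⟩ := mem_occupiedAfter.1 hmem
      have hjc : j ≠ c := by intro hjc; rw [hjc] at hj; exact absurd hj (lt_irrefl _)
      rw [hlucky j hjc] at hjs
      exact hnem j hjc (by rw [Option.some_injective _ hjs, he])
    constructor
    · apply mem_occupiedAfter.2
      exact ⟨c, Nat.lt_succ_self _, by unfold carSpot; exact nextSpot_eq_some_self hnot⟩
    · exact hnot
  refine ⟨c, m, hacm, himg, ?_⟩
  -- order condition
  intro j hjc hjD
  simp only [Dset, Finset.mem_filter, Finset.mem_univ, true_and] at hjD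
  have hmem_of_early : α j ∈ occupiedAfter α c.val → j < c := by
    intro hmem
    obtain ⟨j', hj', hj's⟩ := mem_occupiedAfter.1 hmem
    have hj'c : j' ≠ c := by intro he; rw [he] at hj'; exact absurd hj' (lt_irrefl _)
    rw [hlucky j' hj'c] at hj's
    have : j' = j := hinj
      (by simp [Finset.mem_coe, Finset.mem_erase, hj'c])
      (by simp [Finset.mem_coe, Finset.mem_erase, hjc])
      (Option.some_injective _ hj's)
    rw [← this]; exact hj'
  rcases hcs : carSpot α c with _ | s
  · -- c fails to park : everything ≥ α c occupied
    have hall := nextSpot_eq_none_iff.1 hcs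
    exact hmem_of_early (hall _ hjD.1)
  · -- c parks at s ; then s = m and α c < m
    have hs := nextSpot_eq_some_iff.1 hcs
    have hsm : s = m := by
      by_contra hsm
      have hsin : s ∈ (Finset.univ.erase c).image α := by
        rw [himg]; exact Finset.mem_erase.2 ⟨hsm, Finset.mem_univ _⟩
      obtain ⟨j', hj', hj's⟩ := Finset.mem_image.1 hsin
      have hj'c : j' ≠ c := (Finset.mem_erase.1 hj').1
      have := hlucky j' hj'c
      rw [hj's] at this
      exact hj'c (carSpot_inj this hcs)
    rw [hsm] at hs
    have hcm : α c < m := lt_of_le_of_ne hs.1 hacm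
    exact hmem_of_early (hs.2.2 _ hjD.1 (hjD.2 hcm))

lemma struct_unlucky {c m : Fin n} {α : Fin n → Fin n} (h : Struct c m α) :
    Finset.univ.filter (fun i : Fin n => ¬ (carSpot α i = some (α i))) = {c} := by
  ext j
  simp only [Finset.mem_filter, Finset.mem_univ, true_and, Finset.mem_singleton]
  constructor
  · intro hj
    by_contra hjc
    exact hj (carSpot_of_struct_ne h hjc)
  · rintro rfl
    exact carSpot_of_struct_c h

lemma struct_unique {c m c' m' : Fin n} {α : Fin n → Fin n}
    (h : Struct c m α) (h' : Struct c' m' α) : c = c' ∧ m = m' := by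
  have hc : c = c' := by
    have := (struct_unlucky h).symm.trans (struct_unlucky h')
    exact Finset.singleton_injective this
  subst hc
  refine ⟨rfl, ?_⟩
  have himg := h.2.1.symm.trans h'.2.1
  by_contra hmm
  have : m ∈ Finset.univ.erase m' := Finset.mem_erase.2 ⟨hmm, Finset.mem_univ _⟩
  rw [← himg] at this
  exact (Finset.mem_erase.1 this).1 rfl

-- Part D : counting block functions

def BlockCond (c p : Fin n) (P Q D E : Finset (Fin n)) (α : Fin n → Fin n) : Prop :=
  α c = p ∧ (∀ j ∈ P, α j ∈ D) ∧ (∀ j ∈ Q, α j ∈ E) ∧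
  ∀ j ∈ P ∪ Q, ∀ k ∈ P ∪ Q, α j = α k → j = k

instance (c p : Fin n) (P Q D E : Finset (Fin n)) (α : Fin n → Fin n) :
    Decidable (BlockCond c p P Q D E α) := by
  unfold BlockCond; infer_instance

lemma card_blockCond {c p : Fin n} {P Q D E : Finset (Fin n)}
    (hcP : c ∉ P) (hcQ : c ∉ Q) (hPQ : Disjoint P Q) (hDE : Disjoint D E)
    (huniv : P ∪ Q = Finset.univ.erase c)
    (hPD : P.card = D.card) (hQE : Q.card = E.card) :
    (Finset.univ.filter (fun α : Fin n → Fin n => BlockCond c p P Q D E α)).card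
      = P.card.factorial * Q.card.factorial := by
  classical
  rw [← Fintype.card_subtype]
  have bijP : ∀ (α : Fin n → Fin n) (hα : BlockCond c p P Q D E α),
      Function.Bijective (fun x : {x // x ∈ P} =>
        (⟨α x.1, hα.2.1 x.1 x.2⟩ : {y // y ∈ D})) := by
    intro α hα
    rw [Fintype.bijective_iff_injective_and_card]
    constructor
    · intro x y hxy
      have : α x.1 = α y.1 := congrArg Subtype.val hxy
      exact Subtype.ext (hα.2.2.2 x.1 (Finset.mem_union_left _ x.2)
        y.1 (Finset.mem_union_left _ y.2) this)
    · simp [hPD]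
  have bijQ : ∀ (α : Fin n → Fin n) (hα : BlockCond c p P Q D E α),
      Function.Bijective (fun x : {x // x ∈ Q} =>
        (⟨α x.1, hα.2.2.1 x.1 x.2⟩ : {y // y ∈ E})) := by
    intro α hα
    rw [Fintype.bijective_iff_injective_and_card]
    constructor
    · intro x y hxy
      have : α x.1 = α y.1 := congrArg Subtype.val hxy
      exact Subtype.ext (hα.2.2.2 x.1 (Finset.mem_union_right _ x.2)
        y.1 (Finset.mem_union_right _ y.2) this)
    · simp [hQE]
  set glue : (({x // x ∈ P} ≃ {y // y ∈ D}) × ({x // x ∈ Q} ≃ {y // y ∈ E})) →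
      (Fin n → Fin n) := fun fg j =>
    if hj : j ∈ P then (fg.1 ⟨j, hj⟩ : Fin n)
    else if hj' : j ∈ Q then (fg.2 ⟨j, hj'⟩ : Fin n) else p with hglue_def
  have hQnotP : ∀ {j : Fin n}, j ∈ Q → j ∉ P := fun hj hjP =>
    (Finset.disjoint_left.1 hPQ hjP) hj
  have hglueP : ∀ fg (j : Fin n) (hj : j ∈ P), glue fg j = (fg.1 ⟨j, hj⟩ : Fin n) := by
    intro fg j hj; simp [hglue_def, dif_pos hj]
  have hglueQ : ∀ fg (j : Fin n) (hj : j ∈ Q), glue fg j = (fg.2 ⟨j, hj⟩ : Fin n) := by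
    intro fg j hj; simp [hglue_def, dif_neg (hQnotP hj), dif_pos hj]
  have hgluec : ∀ fg, glue fg c = p := by
    intro fg; simp [hglue_def, dif_neg hcP, dif_neg hcQ]
  have hcond : ∀ fg, BlockCond c p P Q D E (glue fg) := by
    intro fg
    refine ⟨hgluec fg, ?_, ?_, ?_⟩
    · intro j hj; rw [hglueP fg j hj]; exact (fg.1 ⟨j, hj⟩).2
    · intro j hj; rw [hglueQ fg j hj]; exact (fg.2 ⟨j, hj⟩).2
    · intro j hj k hk he
      rcases Finset.mem_union.1 hj with hjP | hjQ
      · rcases Finset.mem_union.1 hk with hkP | hkQ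
        · rw [hglueP fg j hjP, hglueP fg k hkP] at he
          have := fg.1.injective (Subtype.ext he)
          exact congrArg Subtype.val this
        · rw [hglueP fg j hjP, hglueQ fg k hkQ] at he
          have h1 : (fg.1 ⟨j, hjP⟩ : Fin n) ∈ D := (fg.1 ⟨j, hjP⟩).2
          rw [he] at h1
          exact absurd (fg.2 ⟨k, hkQ⟩).2 (Finset.disjoint_left.1 hDE h1)
      · rcases Finset.mem_union.1 hk with hkP | hkQ
        · rw [hglueQ fg j hjQ, hglueP fg k hkP] at he
          have h1 : (fg.2 ⟨j, hjQ⟩ : Fin n) ∈ E := (fg.2 ⟨j, hjQ⟩).2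
          have h2 : (fg.1 ⟨k, hkP⟩ : Fin n) ∈ D := (fg.1 ⟨k, hkP⟩).2
          rw [he] at h1
          exact absurd h1 (Finset.disjoint_left.1 hDE h2)
        · rw [hglueQ fg j hjQ, hglueQ fg k hkQ] at he
          have := fg.2.injective (Subtype.ext he)
          exact congrArg Subtype.val this
  have key : {α : Fin n → Fin n // BlockCond c p P Q D E α} ≃
      ({x // x ∈ P} ≃ {y // y ∈ D}) × ({x // x ∈ Q} ≃ {y // y ∈ E}) :=
    { toFun := fun a => (Equiv.ofBijective _ (bijP a.1 a.2), Equiv.ofBijective _ (bijQ a.1 a.2))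
      invFun := fun fg => ⟨glue fg, hcond fg⟩
      left_inv := by
        rintro ⟨α, hα⟩
        apply Subtype.ext
        funext j
        show glue _ j = α j
        by_cases hjP : j ∈ P
        · exact hglueP _ j hjP
        · by_cases hjQ : j ∈ Q
          · exact hglueQ _ j hjQ
          · have hjc : j = c := by
              by_contra hjc
              have : j ∈ P ∪ Q := by
                rw [huniv]; exact Finset.mem_erase.2 ⟨hjc, Finset.mem_univ _⟩
              rcases Finset.mem_union.1 this with h' | h'
              · exact hjP h'
              · exact hjQ h'
            rw [hjc, hgluec, hα.1]
      right_inv := by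
        rintro ⟨f, g⟩
        apply Prod.ext
        · apply Equiv.ext
          intro x
          apply Subtype.ext
          show glue (f, g) x.1 = (f x : Fin n)
          rw [hglueP (f, g) x.1 x.2]
        · apply Equiv.ext
          intro x
          apply Subtype.ext
          show glue (f, g) x.1 = (g x : Fin n)
          rw [hglueQ (f, g) x.1 x.2] }
  rw [Fintype.card_congr key, Fintype.card_prod,
    Fintype.card_equiv (Fintype.equivOfCardEq (by simp [hPD] : Fintype.card {x // x ∈ P} = Fintype.card {y // y ∈ D})),
    Fintype.card_equiv (Fintype.equivOfCardEq (by simp [hQE] : Fintype.card {x // x ∈ Q} = Fintype.card {y // y ∈ E}))]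
  simp

-- Part E : counting structured preference lists for fixed (c, m, p)

lemma p_mem_Dset (p m : Fin n) : p ∈ Dset p m :=
  Finset.mem_filter.2 ⟨Finset.mem_univ _, le_refl _, fun h => h⟩

lemma m_not_mem_Dset {p m : Fin n} (hpm : p ≠ m) : m ∉ Dset p m := by
  intro hmem
  rcases Finset.mem_filter.1 hmem with ⟨-, hpm', hlt⟩
  rcases lt_or_gt_of_ne hpm with h | h
  · exact absurd (hlt h) (lt_irrefl _)
  · exact absurd (lt_of_lt_of_le h hpm') (lt_irrefl _)

lemma Dset_subset_erase {p m : Fin n} (hpm : p ≠ m) :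
    Dset p m ⊆ Finset.univ.erase m :=
  Finset.subset_erase.2 ⟨Finset.subset_univ _, m_not_mem_Dset hpm⟩

lemma card_struct_p {c m p : Fin n} (hpm : p ≠ m) :
    (Finset.univ.filter fun α : Fin n → Fin n => Struct c m α ∧ α c = p).card
      = (c.val).choose (Dset p m).card *
        ((Dset p m).card.factorial * (n - 1 - (Dset p m).card).factorial) := by
  classical
  set Dp := Dset p m with hDp
  set d := Dp.card with hd
  set L := Finset.Iio c with hL
  set S := Finset.univ.filter fun α : Fin n → Fin n => Struct c m α ∧ α c = p with hS
  set φ : (Fin n → Fin n) → Finset (Fin n) :=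
    fun α => Finset.univ.filter (fun j => j ≠ c ∧ α j ∈ Dp) with hφ
  have hmaps : ∀ α ∈ S, φ α ∈ Finset.powersetCard d L := by
    intro α hα
    rcases Finset.mem_filter.1 hα with ⟨-, hst, hcp⟩
    have hsub : φ α ⊆ L := by
      intro j hj
      rcases Finset.mem_filter.1 hj with ⟨-, hjc, hjD⟩
      have : j < c := hst.2.2 j hjc (by rw [hcp]; exact hjD)
      exact Finset.mem_Iio.2 this
    have hinj : Set.InjOn α ↑(φ α) := by
      apply Set.InjOn.mono _ hst.injOn
      intro j hj
      have hj' := Finset.mem_filter.1 (Finset.mem_coe.1 hj)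
      exact Finset.mem_coe.2 (Finset.mem_erase.2 ⟨hj'.2.1, Finset.mem_univ _⟩)
    have himg : (φ α).image α = Dp := by
      apply Finset.eq_of_subset_of_card_le
      · intro s hs
        obtain ⟨j, hj, hjs⟩ := Finset.mem_image.1 hs
        rw [← hjs]; exact (Finset.mem_filter.1 hj).2.2
      · apply Finset.card_le_card
        intro s hs
        have hsm : s ≠ m := fun he => m_not_mem_Dset hpm (by rw [he] at hs; exact hs)
        obtain ⟨j, hjc, hjs⟩ := hst.surj hsm
        have hjD : α j ∈ Dp := by rw [hjs]; exact hs
        exact Finset.mem_image.2 ⟨j, Finset.mem_filter.2 ⟨Finset.mem_univ _, hjc, hjD⟩, hjs⟩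
    have hcard : (φ α).card = d := by
      rw [← Finset.card_image_of_injOn hinj, himg]
    exact Finset.mem_powersetCard.2 ⟨hsub, hcard⟩
  rw [hS] at hmaps ⊢
  rw [Finset.card_eq_sum_card_fiberwise hmaps]
  have hfib : ∀ P ∈ Finset.powersetCard d L,
      ((Finset.univ.filter fun α : Fin n → Fin n => Struct c m α ∧ α c = p).filter
        (fun α => φ α = P)).card = d.factorial * (n - 1 - d).factorial := by
    intro P hP
    obtain ⟨hPL, hPc⟩ := Finset.mem_powersetCard.1 hP
    have hPerase : P ⊆ Finset.univ.erase c := by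
      intro j hj
      exact Finset.mem_erase.2 ⟨ne_of_lt (Finset.mem_Iio.1 (hPL hj)), Finset.mem_univ _⟩
    set Q := Finset.univ.erase c \ P with hQ
    set E := Finset.univ.erase m \ Dp with hE
    have hPQ : P ∪ Q = Finset.univ.erase c := Finset.union_sdiff_of_subset hPerase
    have hDE : Dp ∪ E = Finset.univ.erase m :=
      Finset.union_sdiff_of_subset (Dset_subset_erase hpm)
    have hQcard : Q.card = n - 1 - d := by
      rw [hQ, Finset.card_sdiff_of_subset hPerase, Finset.card_erase_of_mem (Finset.mem_univ _),
        Finset.card_univ, Fintype.card_fin, hPc]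
    have hEcard : E.card = n - 1 - d := by
      rw [hE, Finset.card_sdiff_of_subset (Dset_subset_erase hpm),
        Finset.card_erase_of_mem (Finset.mem_univ _), Finset.card_univ, Fintype.card_fin]
    have hset : (Finset.univ.filter fun α : Fin n → Fin n => Struct c m α ∧ α c = p).filter
        (fun α => φ α = P) = Finset.univ.filter
          (fun α : Fin n → Fin n => BlockCond c p P Q Dp E α) := by
      ext α
      simp only [Finset.mem_filter, Finset.mem_univ, true_and]
      constructor
      · rintro ⟨⟨hst, hcp⟩, hPα⟩
        refine ⟨hcp, ?_, ?_, ?_⟩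
        · intro j hj
          rw [← hPα] at hj
          exact (Finset.mem_filter.1 hj).2.2
        · intro j hj
          rcases Finset.mem_sdiff.1 hj with ⟨hjc, hjP⟩
          have hjc' : j ≠ c := (Finset.mem_erase.1 hjc).1
          refine Finset.mem_sdiff.2 ⟨Finset.mem_erase.2 ⟨hst.ne_m hjc', Finset.mem_univ _⟩, ?_⟩
          intro hjD
          exact hjP (hPα ▸ Finset.mem_filter.2 ⟨Finset.mem_univ _, hjc', hjD⟩)
        · intro j hj k hk he
          rw [hPQ] at hj hk
          exact hst.injOn (Finset.mem_coe.2 hj) (Finset.mem_coe.2 hk) he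
      · intro hbc
        obtain ⟨hcp, hmapP, hmapQ, hinj⟩ := hbc
        have hinj' : Set.InjOn α ↑(Finset.univ.erase c) := by
          intro x hx y hy hxy
          rw [← hPQ] at hx hy
          exact hinj x (Finset.mem_coe.1 hx) y (Finset.mem_coe.1 hy) hxy
        have himgP : P.image α = Dp := by
          apply Finset.eq_of_subset_of_card_le
          · intro s hs
            obtain ⟨j, hj, hjs⟩ := Finset.mem_image.1 hs
            rw [← hjs]; exact hmapP j hj
          · rw [Finset.card_image_of_injOn (fun x hx y hy hxy =>
              hinj x (Finset.mem_union_left _ hx) y (Finset.mem_union_left _ hy) hxy), hPc]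
        have himgQ : Q.image α = E := by
          apply Finset.eq_of_subset_of_card_le
          · intro s hs
            obtain ⟨j, hj, hjs⟩ := Finset.mem_image.1 hs
            rw [← hjs]; exact hmapQ j hj
          · rw [Finset.card_image_of_injOn (fun x hx y hy hxy =>
              hinj x (Finset.mem_union_right _ hx) y (Finset.mem_union_right _ hy) hxy),
              hQcard, hEcard]
        have hst : Struct c m α := by
          refine ⟨by rw [hcp]; exact hpm, ?_, ?_⟩
          · rw [← hPQ, Finset.image_union, himgP, himgQ, hDE]
          · intro j hjc hjD
            rw [hcp] at hjD
            have hjPQ : j ∈ P ∪ Q := by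
              rw [hPQ]; exact Finset.mem_erase.2 ⟨hjc, Finset.mem_univ _⟩
            rcases Finset.mem_union.1 hjPQ with hjP | hjQ
            · exact Finset.mem_Iio.1 (hPL hjP)
            · exact absurd hjD (Finset.mem_sdiff.1 (hmapQ j hjQ)).2
        refine ⟨⟨hst, hcp⟩, ?_⟩
        ext j
        simp only [hφ, Finset.mem_filter, Finset.mem_univ, true_and]
        constructor
        · rintro ⟨hjc, hjD⟩
          have hjPQ : j ∈ P ∪ Q := by
            rw [hPQ]; exact Finset.mem_erase.2 ⟨hjc, Finset.mem_univ _⟩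
          rcases Finset.mem_union.1 hjPQ with hjP | hjQ
          · exact hjP
          · exact absurd hjD (Finset.mem_sdiff.1 (hmapQ j hjQ)).2
        · intro hjP
          exact ⟨(Finset.mem_erase.1 (hPerase hjP)).1, hmapP j hjP⟩
    have hcount := card_blockCond (c := c) (p := p) (P := P) (Q := Q) (D := Dp) (E := E)
      (fun hc => absurd (Finset.mem_Iio.1 (hPL hc)) (lt_irrefl _))
      (fun hc => (Finset.mem_erase.1 (Finset.mem_sdiff.1 hc).1).1 rfl)
      Finset.disjoint_sdiff Finset.disjoint_sdiff hPQ (hPc.trans hd.symm ▸ rfl)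
      (hQcard.trans hEcard.symm)
    rw [hset, hcount, hPc, hQcard]
  rw [Finset.sum_congr rfl hfib, Finset.sum_const, Finset.card_powersetCard, smul_eq_mul]
  congr 1
  rw [hL, Fin.card_Iio]

-- Part F : pair counting and assembly

lemma card_Dset {p m : Fin n} (hpm : p ≠ m) :
    (Dset p m).card = if p < m then m.val - p.val else n - p.val := by
  split_ifs with h
  · have he : Dset p m = Finset.Ico p m := by
      ext s
      simp only [Dset, Finset.mem_filter, Finset.mem_univ, true_and, Finset.mem_Ico]
      constructor
      · rintro ⟨h1, h2⟩; exact ⟨h1, h2 h⟩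
      · rintro ⟨h1, h2⟩; exact ⟨h1, fun _ => h2⟩
    rw [he, Fin.card_Ico]
  · have he : Dset p m = Finset.Ici p := by
      ext s
      simp only [Dset, Finset.mem_filter, Finset.mem_univ, true_and, Finset.mem_Ici]
      constructor
      · rintro ⟨h1, _⟩; exact h1
      · intro h1; exact ⟨h1, fun hlt => absurd hlt h⟩
    rw [he, Fin.card_Ici]

lemma one_le_card_Dset (p m : Fin n) : 1 ≤ (Dset p m).card :=
  Finset.card_pos.2 ⟨p, p_mem_Dset p m⟩

lemma card_Dset_le {p m : Fin n} (hpm : p ≠ m) : (Dset p m).card ≤ n - 1 := by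
  calc (Dset p m).card ≤ (Finset.univ.erase m).card :=
        Finset.card_le_card (Dset_subset_erase hpm)
    _ = n - 1 := by
        rw [Finset.card_erase_of_mem (Finset.mem_univ _), Finset.card_univ, Fintype.card_fin]

lemma card_pairs {ℓ : ℕ} (hℓ1 : 1 ≤ ℓ) (hℓ2 : ℓ ≤ n - 1) :
    ((Finset.univ : Finset (Fin n × Fin n)).filter
      (fun y => ¬ y.2 = y.1 ∧ (Dset y.2 y.1).card = ℓ)).card = 2 * (n - ℓ) := by
  classical
  have hn2 : 2 ≤ n := by omega
  set s := (Finset.univ : Finset (Fin n × Fin n)).filter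
      (fun y => ¬ y.2 = y.1 ∧ (Dset y.2 y.1).card = ℓ) with hs
  have hsplit := Finset.card_filter_add_card_filter_not
    (s := s) (p := fun y : Fin n × Fin n => y.2 < y.1)
  have hmemA : ∀ y : Fin n × Fin n,
      y ∈ s.filter (fun y => y.2 < y.1) ↔ (y.2 < y.1 ∧ y.1.val = y.2.val + ℓ) := by
    intro y
    rw [Finset.mem_filter, hs, Finset.mem_filter]
    simp only [Finset.mem_univ, true_and]
    constructor
    · rintro ⟨⟨hne, hd⟩, hlt⟩
      rw [card_Dset hne, if_pos hlt] at hd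
      have hv := (Fin.lt_def.1 hlt)
      exact ⟨hlt, by omega⟩
    · rintro ⟨hlt, hv⟩
      have hne : y.2 ≠ y.1 := ne_of_lt hlt
      refine ⟨⟨hne, ?_⟩, hlt⟩
      rw [card_Dset hne, if_pos hlt]
      omega
  have hmemB : ∀ y : Fin n × Fin n,
      y ∈ s.filter (fun y => ¬ y.2 < y.1) ↔ (y.1 < y.2 ∧ y.2.val = n - ℓ) := by
    intro y
    rw [Finset.mem_filter, hs, Finset.mem_filter]
    simp only [Finset.mem_univ, true_and]
    constructor
    · rintro ⟨⟨hne, hd⟩, hlt⟩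
      have hlt' : y.1 < y.2 := lt_of_le_of_ne (le_of_not_gt hlt) (Ne.symm hne)
      rw [card_Dset hne, if_neg hlt] at hd
      have := y.2.isLt
      exact ⟨hlt', by omega⟩
    · rintro ⟨hlt, hv⟩
      have hne : y.2 ≠ y.1 := ne_of_gt hlt
      refine ⟨⟨hne, ?_⟩, not_lt_of_gt hlt⟩
      rw [card_Dset hne, if_neg (not_lt_of_gt hlt)]
      have := y.2.isLt
      omega
  have hA : (s.filter (fun y => y.2 < y.1)).card = n - ℓ := by
    rw [show n - ℓ = (Finset.range (n - ℓ)).card from (Finset.card_range _).symm]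
    refine Finset.card_bij' (fun y _ => y.2.val)
      (fun a ha => ((⟨a + ℓ, by have := Finset.mem_range.1 ha; omega⟩ : Fin n),
        (⟨a, by have := Finset.mem_range.1 ha; omega⟩ : Fin n))) ?_ ?_ ?_ ?_
    · intro y hy
      obtain ⟨hlt, hv⟩ := (hmemA y).1 hy
      have := y.1.isLt
      show (↑y.2 : ℕ) ∈ Finset.range (n - ℓ)
      exact Finset.mem_range.2 (by omega)
    · intro a ha
      apply (hmemA _).2
      refine ⟨?_, rfl⟩
      exact Fin.mk_lt_mk.2 (by have := Finset.mem_range.1 ha; omega)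
    · intro y hy
      obtain ⟨hlt, hv⟩ := (hmemA y).1 hy
      apply Prod.ext_iff.2
      constructor
      · apply Fin.ext
        show ↑y.2 + ℓ = ↑y.1
        omega
      · apply Fin.ext
        show (↑y.2 : ℕ) = ↑y.2
        rfl
    · intro a ha
      rfl
  have hB : (s.filter (fun y => ¬ y.2 < y.1)).card = n - ℓ := by
    rw [show n - ℓ = (Finset.range (n - ℓ)).card from (Finset.card_range _).symm]
    refine Finset.card_bij' (fun y _ => y.1.val)
      (fun a ha => ((⟨a, by have := Finset.mem_range.1 ha; omega⟩ : Fin n),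
        (⟨n - ℓ, by omega⟩ : Fin n))) ?_ ?_ ?_ ?_
    · intro y hy
      obtain ⟨hlt, hv⟩ := (hmemB y).1 hy
      have := Fin.lt_def.1 hlt
      show (↑y.1 : ℕ) ∈ Finset.range (n - ℓ)
      exact Finset.mem_range.2 (by omega)
    · intro a ha
      apply (hmemB _).2
      refine ⟨?_, rfl⟩
      exact Fin.mk_lt_mk.2 (by have := Finset.mem_range.1 ha; omega)
    · intro y hy
      obtain ⟨hlt, hv⟩ := (hmemB y).1 hy
      apply Prod.ext_iff.2
      constructor
      · apply Fin.ext
        show (↑y.1 : ℕ) = ↑y.1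
        rfl
      · apply Fin.ext
        show n - ℓ = ↑y.2
        omega
    · intro a ha
      rfl
  omega

lemma luckyL_eq_sum_struct (hn : 1 ≤ n) :
    luckyL n = ∑ cm : Fin n × Fin n,
      (Finset.univ.filter (fun α : Fin n → Fin n => Struct cm.1 cm.2 α)).card := by
  classical
  unfold luckyL
  have hset : (Finset.univ.filter
        (fun α : Fin n → Fin n => (luckyCount α : ℤ) = (n : ℤ) - 1))
      = Finset.univ.filter
        (fun α : Fin n → Fin n => ∃ cm : Fin n × Fin n, Struct cm.1 cm.2 α) := by
    ext α
    simp only [Finset.mem_filter, Finset.mem_univ, true_and]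
    constructor
    · intro h
      have h' : luckyCount α = n - 1 := by omega
      obtain ⟨c, m, hcm⟩ := struct_of_luckyCount hn h'
      exact ⟨(c, m), hcm⟩
    · rintro ⟨⟨c, m⟩, hcm⟩
      have h' := luckyCount_of_struct hcm
      rw [h']
      omega
  rw [hset]
  have hbu : Finset.univ.filter
        (fun α : Fin n → Fin n => ∃ cm : Fin n × Fin n, Struct cm.1 cm.2 α)
      = (Finset.univ : Finset (Fin n × Fin n)).biUnion
          (fun cm => Finset.univ.filter (fun α : Fin n → Fin n => Struct cm.1 cm.2 α)) := by
    ext α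
    constructor
    · intro hα
      obtain ⟨cm, h⟩ := (Finset.mem_filter.1 hα).2
      exact Finset.mem_biUnion.2 ⟨cm, Finset.mem_univ _, Finset.mem_filter.2 ⟨Finset.mem_univ _, h⟩⟩
    · intro hα
      obtain ⟨cm, -, h⟩ := Finset.mem_biUnion.1 hα
      exact Finset.mem_filter.2 ⟨Finset.mem_univ _, cm, (Finset.mem_filter.1 h).2⟩
  rw [hbu]
  refine Finset.card_biUnion ?_
  intro x _ y _ hxy
  rw [Function.onFun, Finset.disjoint_left]
  intro α hx hy
  have h1 := (Finset.mem_filter.1 hx).2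
  have h2 := (Finset.mem_filter.1 hy).2
  obtain ⟨hc, hm⟩ := struct_unique h1 h2
  exact hxy (Prod.ext_iff.2 ⟨hc, hm⟩)

theorem luckyL_eq_nat (hn : 1 ≤ n) :
    luckyL n = ∑ c : Fin n, ∑ ℓ ∈ Finset.Icc 1 (n-1),
      2 * (n - ℓ) * ((c.val).choose ℓ * (ℓ.factorial * (n - 1 - ℓ).factorial)) := by
  classical
  rw [luckyL_eq_sum_struct hn, Fintype.sum_prod_type]
  apply Finset.sum_congr rfl
  intro c _
  have step1 : ∀ m : Fin n,
      (Finset.univ.filter (fun α : Fin n → Fin n => Struct c m α)).card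
        = ∑ p : Fin n, (Finset.univ.filter
            (fun α : Fin n → Fin n => Struct c m α ∧ α c = p)).card := by
    intro m
    rw [Finset.card_eq_sum_card_fiberwise
      (f := fun α : Fin n → Fin n => α c) (t := Finset.univ) (fun _ _ => Finset.mem_univ _)]
    exact Finset.sum_congr rfl fun p _ => by rw [Finset.filter_filter]
  have step2 : ∀ m p : Fin n,
      (Finset.univ.filter (fun α : Fin n → Fin n => Struct c m α ∧ α c = p)).card
        = if ¬ p = m then (c.val).choose ((Dset p m).card) *
            (((Dset p m).card).factorial * (n - 1 - (Dset p m).card).factorial) else 0 := by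
    intro m p
    by_cases h : p = m
    · rw [if_neg (fun h' => h' h), Finset.card_eq_zero]
      apply Finset.filter_eq_empty_iff.2
      rintro α - ⟨hst, hcp⟩
      exact hst.1 (by rw [hcp, h])
    · rw [if_pos h]
      exact card_struct_p h
  calc ∑ m : Fin n, (Finset.univ.filter (fun α : Fin n → Fin n => Struct c m α)).card
      = ∑ y : Fin n × Fin n, (if ¬ y.2 = y.1 then (c.val).choose ((Dset y.2 y.1).card) *
          (((Dset y.2 y.1).card).factorial * (n - 1 - (Dset y.2 y.1).card).factorial) else 0) := by
        rw [Fintype.sum_prod_type]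
        exact Finset.sum_congr rfl fun m _ => by
          rw [step1 m]; exact Finset.sum_congr rfl fun p _ => step2 m p
    _ = ∑ y ∈ (Finset.univ : Finset (Fin n × Fin n)).filter (fun y => ¬ y.2 = y.1),
          (c.val).choose ((Dset y.2 y.1).card) *
          (((Dset y.2 y.1).card).factorial * (n - 1 - (Dset y.2 y.1).card).factorial) := by
        rw [Finset.sum_filter]
    _ = ∑ ℓ ∈ Finset.Icc 1 (n-1), ∑ y ∈ ((Finset.univ : Finset (Fin n × Fin n)).filter
          (fun y => ¬ y.2 = y.1)).filter (fun y => (Dset y.2 y.1).card = ℓ),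
          (c.val).choose ((Dset y.2 y.1).card) *
          (((Dset y.2 y.1).card).factorial * (n - 1 - (Dset y.2 y.1).card).factorial) := by
        rw [Finset.sum_fiberwise_of_maps_to]
        intro y hy
        have hne := (Finset.mem_filter.1 hy).2
        exact Finset.mem_Icc.2 ⟨one_le_card_Dset _ _, card_Dset_le hne⟩
    _ = ∑ ℓ ∈ Finset.Icc 1 (n-1),
          2 * (n - ℓ) * ((c.val).choose ℓ * (ℓ.factorial * (n - 1 - ℓ).factorial)) := by
        apply Finset.sum_congr rfl
        intro ℓ hℓ
        obtain ⟨hℓ1, hℓ2⟩ := Finset.mem_Icc.1 hℓ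
        rw [Finset.filter_filter]
        rw [Finset.sum_congr rfl (fun y hy => by
          rw [(Finset.mem_filter.1 hy).2.2]), Finset.sum_const, card_pairs hℓ1 hℓ2,
          smul_eq_mul]

-- Part G : arithmetic identities

lemma sum_range_choose' (n ℓ : ℕ) :
    ∑ c ∈ Finset.range n, c.choose ℓ = n.choose (ℓ+1) := by
  induction n with
  | zero => simp
  | succ n ih =>
    rw [Finset.sum_range_succ, ih, Nat.choose_succ_succ' n ℓ]
    omega

lemma sum_range_weighted_choose (n ℓ : ℕ) :
    ∑ c ∈ Finset.range n, (n - c) * c.choose ℓ = (n+1).choose (ℓ+2) := by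
  induction n with
  | zero => rw [Finset.sum_range_zero, Nat.choose_eq_zero_of_lt (by omega)]
  | succ n ih =>
    have hstep : ∀ c ∈ Finset.range (n+1),
        (n+1-c) * c.choose ℓ = (n-c) * c.choose ℓ + c.choose ℓ := by
      intro c hc
      have := Finset.mem_range.1 hc
      have h1 : n+1-c = (n-c)+1 := by omega
      rw [h1]; ring
    rw [Finset.sum_congr rfl hstep, Finset.sum_add_distrib, sum_range_choose',
      Finset.sum_range_succ (f := fun c => (n-c) * c.choose ℓ), Nat.sub_self, zero_mul,
      add_zero, ih, Nat.choose_succ_succ' (n+1) (ℓ+1)]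
    show (n+1).choose (ℓ+2) + (n+1).choose (ℓ+1) = (n+1).choose (ℓ+1) + (n+1).choose (ℓ+2)
    exact Nat.add_comm _ _

lemma luckyL_eq_nat2 (hn : 1 ≤ n) :
    luckyL n = ∑ ℓ ∈ Finset.Icc 1 (n-1),
      2 * (n - ℓ) * (n.choose (ℓ+1) * (ℓ.factorial * (n - 1 - ℓ).factorial)) := by
  rw [luckyL_eq_nat hn, Finset.sum_comm]
  apply Finset.sum_congr rfl
  intro ℓ _
  rw [← Finset.mul_sum,
    Fin.sum_univ_eq_sum_range (fun cv => cv.choose ℓ * (ℓ.factorial * (n-1-ℓ).factorial)),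
    ← Finset.sum_mul, sum_range_choose']

lemma core_sum (hn : 1 ≤ n) {ℓ : ℕ} (hℓ : 1 ≤ ℓ) :
    ∑ i ∈ Finset.Icc 2 n, (n - i + 1) * ((i-1).descFactorial ℓ)
      = ℓ.factorial * (n+1).choose (ℓ+2) := by
  have h1 : Finset.Icc 2 n = Finset.Ico 2 (n+1) := (Finset.Ico_add_one_right_eq_Icc 2 n).symm
  rw [h1, Finset.sum_Ico_eq_sum_range, show n+1-2 = n-1 from by omega]
  have h2 : ∀ j ∈ Finset.range (n-1),
      (n-(2+j)+1) * ((2+j-1).descFactorial ℓ) = (n-(1+j)) * ((1+j).descFactorial ℓ) := by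
    intro j hj
    have := Finset.mem_range.1 hj
    have e1 : n-(2+j)+1 = n-(1+j) := by omega
    have e2 : 2+j-1 = 1+j := by omega
    rw [e1, e2]
  rw [Finset.sum_congr rfl h2]
  have h3 : ∑ c ∈ Finset.range n, (n-c) * (c.descFactorial ℓ)
      = ∑ j ∈ Finset.range (n-1), (n-(1+j)) * ((1+j).descFactorial ℓ) := by
    obtain ⟨ℓ', rfl⟩ : ∃ ℓ', ℓ = ℓ'+1 := ⟨ℓ-1, by omega⟩
    rw [Finset.range_eq_Ico, Finset.sum_eq_sum_Ico_succ_bot (by omega : 0 < n),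
      Nat.zero_descFactorial_succ, mul_zero, zero_add, Finset.sum_Ico_eq_sum_range]
  rw [← h3]
  have h4 : ∀ c ∈ Finset.range n,
      (n-c) * (c.descFactorial ℓ) = ℓ.factorial * ((n-c) * c.choose ℓ) := by
    intro c _
    rw [Nat.descFactorial_eq_factorial_mul_choose]
    ring
  rw [Finset.sum_congr rfl h4, ← Finset.mul_sum, sum_range_weighted_choose]

lemma rhs_nat (hn : 1 ≤ n) :
    (∑ i ∈ Finset.Icc 2 n, ∑ ℓ ∈ Finset.range i,
      ℓ * ((n - i + 1) * ((i-1).descFactorial ℓ * (n - ℓ - 1).factorial)))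
    = ∑ ℓ ∈ Finset.Icc 1 (n-1),
        ℓ * ((n+1).choose (ℓ+2) * (ℓ.factorial * (n - 1 - ℓ).factorial)) := by
  have hstep1 : ∀ i ∈ Finset.Icc 2 n,
      ∑ ℓ ∈ Finset.range i, ℓ * ((n - i + 1) * ((i-1).descFactorial ℓ * (n - ℓ - 1).factorial))
      = ∑ ℓ ∈ Finset.range n, ℓ * ((n - i + 1) * ((i-1).descFactorial ℓ * (n - ℓ - 1).factorial)) := by
    intro i hi
    apply Finset.sum_subset (Finset.range_subset_range.2 (Finset.mem_Icc.1 hi).2)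
    intro ℓ _ hℓi
    have hge : ¬ ℓ < i := fun h => hℓi (Finset.mem_range.2 h)
    have h2 := (Finset.mem_Icc.1 hi).1
    have hgt : i - 1 < ℓ := by omega
    rw [Nat.descFactorial_eq_zero_iff_lt.2 hgt, zero_mul, mul_zero, mul_zero]
  rw [Finset.sum_congr rfl hstep1, Finset.sum_comm]
  have hsub : Finset.Icc 1 (n-1) ⊆ Finset.range n := by
    intro ℓ hℓ
    have := Finset.mem_Icc.1 hℓ
    exact Finset.mem_range.2 (by omega)
  rw [← Finset.sum_subset hsub (by
    intro ℓ _ hℓ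
    have hz : ℓ = 0 := by
      by_contra hz
      exact hℓ (Finset.mem_Icc.2 ⟨by omega, by
        have := Finset.mem_range.1 ‹ℓ ∈ Finset.range n›; omega⟩)
    rw [hz]
    simp)]
  apply Finset.sum_congr rfl
  intro ℓ hℓ
  obtain ⟨hℓ1, hℓ2⟩ := Finset.mem_Icc.1 hℓ
  have hre : ∀ i ∈ Finset.Icc 2 n,
      ℓ * ((n - i + 1) * ((i-1).descFactorial ℓ * (n - ℓ - 1).factorial))
        = ((n - i + 1) * ((i-1).descFactorial ℓ)) * (ℓ * (n - ℓ - 1).factorial) := by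
    intro i _; ring
  rw [Finset.sum_congr rfl hre, ← Finset.sum_mul, core_sum hn hℓ1]
  have e1 : n - ℓ - 1 = n - 1 - ℓ := by omega
  rw [e1]; ring

-- Part H : real identity and final theorem


lemma G_tel (G : ℕ → ℝ) (m : ℕ) :
    ∑ i ∈ Finset.range m, (G (1+i) - G (1+i+1)) = G 1 - G (1+m) :=
  Finset.sum_range_sub' (fun i => G (1+i)) m

lemma key_real (n : ℕ) (hn : 2 ≤ n) :
    ((∑ ℓ ∈ Finset.Icc 1 (n-1),
        2 * (n - ℓ) * (n.choose (ℓ+1) * (ℓ.factorial * (n - 1 - ℓ).factorial)) : ℕ) : ℝ)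
    = 2 * ((∑ ℓ ∈ Finset.Icc 1 (n-1),
        ℓ * ((n+1).choose (ℓ+2) * (ℓ.factorial * (n - 1 - ℓ).factorial)) : ℕ) : ℝ) := by
  classical
  have hfacne : ∀ m : ℕ, (m.factorial : ℝ) ≠ 0 :=
    fun m => Nat.cast_ne_zero.2 (Nat.factorial_ne_zero m)
  set G : ℕ → ℝ := fun x => (2*(n:ℝ)+2)/((x:ℝ)+1) + (x:ℝ) with hG
  rw [Nat.cast_sum, Nat.cast_sum, Finset.mul_sum, ← sub_eq_zero, ← Finset.sum_sub_distrib]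
  have hterm : ∀ ℓ ∈ Finset.Icc 1 (n-1),
      (((2 * (n - ℓ) * (n.choose (ℓ+1) * (ℓ.factorial * (n - 1 - ℓ).factorial)) : ℕ) : ℝ)
        - 2 * ((ℓ * ((n+1).choose (ℓ+2) * (ℓ.factorial * (n - 1 - ℓ).factorial)) : ℕ) : ℝ))
      = (2 * (n.factorial : ℝ)) * (G ℓ - G (ℓ+1)) := by
    intro ℓ hℓ
    obtain ⟨hℓ1, hℓ2⟩ := Finset.mem_Icc.1 hℓ
    have hc1 : ℓ + 1 ≤ n := by omega
    have hc2 : ℓ + 2 ≤ n + 1 := by omega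
    have e1 : n - (ℓ+1) = n-1-ℓ := by omega
    have e2 : n+1 - (ℓ+2) = n-1-ℓ := by omega
    have hcast1 : ((n - ℓ : ℕ) : ℝ) = (n : ℝ) - (ℓ : ℝ) := by
      rw [Nat.cast_sub (by omega)]
    push_cast
    rw [hcast1, Nat.cast_choose ℝ hc1, Nat.cast_choose ℝ hc2, e1, e2,
      Nat.factorial_succ (ℓ+1), Nat.factorial_succ ℓ, Nat.factorial_succ n]
    simp only [hG]
    push_cast
    have h1 : ((ℓ:ℝ)+1) ≠ 0 := by positivity
    have h2 : ((ℓ:ℝ)+2) ≠ 0 := by positivity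
    have h3 : ((ℓ:ℝ)+1+1) ≠ 0 := by positivity
    field_simp
    ring
  rw [Finset.sum_congr rfl hterm, ← Finset.mul_sum]
  have hIcc : Finset.Icc 1 (n-1) = Finset.Ico 1 n := by
    rw [← Finset.Ico_add_one_right_eq_Icc 1 (n-1)]
    congr 1
    omega
  have hsum0 : ∑ ℓ ∈ Finset.Icc 1 (n-1), (G ℓ - G (ℓ+1)) = 0 := by
    rw [hIcc, Finset.sum_Ico_eq_sum_range]
    have ht : ∑ i ∈ Finset.range (n-1), (G (1+i) - G (1+i+1)) = G 1 - G (1+(n-1)) :=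
      G_tel G (n-1)
    rw [show 1+(n-1) = n from by omega] at ht
    rw [ht]
    simp only [hG]
    have h1 : ((n:ℝ)+1) ≠ 0 := by positivity
    push_cast
    field_simp
    ring
  rw [hsum0, mul_zero]

/-- For `n ≥ 2`,
`Lₙ = 2 ∑_{i=2}^n ∑_{ℓ=0}^{i-1} ℓ (n-i+1) (i-1)! (n-ℓ-1)! / (i-1-ℓ)!`. -/
theorem luckyL_closed_form (n : ℕ) (hn : 2 ≤ n) :
    (luckyL n : ℝ) = 2 * ∑ i ∈ Finset.Icc 2 n, ∑ ℓ ∈ Finset.range i,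
      (ℓ : ℝ) * ((n - i + 1 : ℕ) : ℝ) * (Nat.factorial (i - 1) : ℝ)
        * (Nat.factorial (n - ℓ - 1) : ℝ) / (Nat.factorial (i - 1 - ℓ) : ℝ) := by
  have hn1 : 1 ≤ n := by omega
  have hfacne : ∀ m : ℕ, (m.factorial : ℝ) ≠ 0 :=
    fun m => Nat.cast_ne_zero.2 (Nat.factorial_ne_zero m)
  have hR : ∑ i ∈ Finset.Icc 2 n, ∑ ℓ ∈ Finset.range i,
      (ℓ : ℝ) * ((n - i + 1 : ℕ) : ℝ) * (Nat.factorial (i - 1) : ℝ)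
        * (Nat.factorial (n - ℓ - 1) : ℝ) / (Nat.factorial (i - 1 - ℓ) : ℝ)
      = ((∑ i ∈ Finset.Icc 2 n, ∑ ℓ ∈ Finset.range i,
          ℓ * ((n - i + 1) * ((i-1).descFactorial ℓ * (n - ℓ - 1).factorial)) : ℕ) : ℝ) := by
    rw [Nat.cast_sum]
    apply Finset.sum_congr rfl
    intro i hi
    rw [Nat.cast_sum]
    apply Finset.sum_congr rfl
    intro ℓ hℓ
    have hi2 := (Finset.mem_Icc.1 hi).1
    have hℓi := Finset.mem_range.1 hℓ
    have hil : ℓ ≤ i - 1 := by omega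
    have hkey := Nat.factorial_mul_descFactorial hil
    have hkey' : ((i-1).factorial : ℝ)
        = ((i-1-ℓ).factorial : ℝ) * (((i-1).descFactorial ℓ : ℕ) : ℝ) := by
      exact_mod_cast congrArg (fun x : ℕ => (x : ℝ)) hkey.symm
    rw [hkey']
    push_cast
    field_simp
  rw [hR, rhs_nat hn1, luckyL_eq_nat2 hn1]
  exact key_real n hn
end

section
/- For n ≥ 2, the number of preference lists α ∈ [n]^n with exactly n−1 lucky cars in which the unique unlucky car is able to park (in a spot other than its preference) equals ∑_{i=2}^n ∑_{ℓ=0}^{i−1} (i−1−ℓ)·C(i−1,ℓ)·ℓ!·C(n−ℓ−1, i−1−ℓ)·(i−1−ℓ)!·(n−i)!, where C(a,b) denotes the binomial coefficient. -/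
open Finset

namespace CUP

variable {n : ℕ}

lemma nextSpot_eq_some {occ : Finset (Fin n)} {p s : Fin n} (h : nextSpot occ p = some s) :
    p ≤ s ∧ s ∉ occ ∧ ∀ t : Fin n, p ≤ t → t ∉ occ → s ≤ t := by
  unfold nextSpot at h
  split_ifs at h with hne
  injection h with h
  subst h
  have hmem := Finset.min'_mem _ hne
  simp only [mem_filter, mem_univ, true_and] at hmem
  exact ⟨hmem.1, hmem.2, fun t ht htocc => Finset.min'_le _ _ (by simp [ht, htocc])⟩

lemma nextSpot_eq_of {occ : Finset (Fin n)} {p q : Fin n} (hq : p ≤ q) (hocc : q ∉ occ)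
    (hmin : ∀ t : Fin n, p ≤ t → t ∉ occ → q ≤ t) : nextSpot occ p = some q := by
  have hne : (Finset.univ.filter (fun s : Fin n => p ≤ s ∧ s ∉ occ)).Nonempty :=
    ⟨q, by simp [hq, hocc]⟩
  unfold nextSpot
  rw [dif_pos hne]
  congr 1
  apply le_antisymm
  · exact Finset.min'_le _ _ (by simp [hq, hocc])
  · have hmem := Finset.min'_mem _ hne
    simp only [mem_filter] at hmem
    exact hmin _ hmem.2.1 hmem.2.2

lemma nextSpot_self {occ : Finset (Fin n)} {p : Fin n} (h : p ∉ occ) :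
    nextSpot occ p = some p :=
  nextSpot_eq_of le_rfl h (fun _ ht _ => ht)

lemma occupiedAfter_succ_of_some {α : Fin n → Fin n} {i : Fin n} {s : Fin n}
    (h : carSpot α i = some s) :
    occupiedAfter α (i.val + 1) = insert s (occupiedAfter α i.val) := by
  have hi : i.val < n := i.isLt
  conv_lhs => rw [occupiedAfter]
  rw [dif_pos hi]
  have hα : (⟨i.val, hi⟩ : Fin n) = i := by exact Fin.eta i hi
  rw [hα]
  unfold carSpot at h
  rw [h]

lemma subset_occupiedAfter_succ (α : Fin n → Fin n) (l : ℕ) :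
    occupiedAfter α l ⊆ occupiedAfter α (l + 1) := by
  show occupiedAfter α l ⊆
    (if h : l < n then
      match nextSpot (occupiedAfter α l) (α ⟨l, h⟩) with
      | some s => insert s (occupiedAfter α l)
      | none => occupiedAfter α l
    else occupiedAfter α l)
  split_ifs with h
  · cases hns : nextSpot (occupiedAfter α l) (α ⟨l, h⟩) with
    | none => exact subset_rfl
    | some s => exact Finset.subset_insert _ _
  · exact subset_rfl

lemma occupiedAfter_mono (α : Fin n → Fin n) {k l : ℕ} (h : k ≤ l) :
    occupiedAfter α k ⊆ occupiedAfter α l := by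
  induction l with
  | zero => simp_all
  | succ l ih =>
    rcases Nat.lt_succ_iff_lt_or_eq.mp (Nat.lt_succ_of_le h) with h' | h'
    · exact (ih (Nat.lt_succ_iff.mp h')).trans
        (subset_occupiedAfter_succ α l)
    · subst h'; exact subset_rfl

lemma carSpot_not_mem {α : Fin n → Fin n} {i : Fin n} {s : Fin n}
    (h : carSpot α i = some s) : s ∉ occupiedAfter α i.val :=
  (nextSpot_eq_some h).2.1

lemma carSpot_distinct {α : Fin n → Fin n} {i j : Fin n} {s : Fin n}
    (hij : i ≠ j) (hi : carSpot α i = some s) (hj : carSpot α j = some s) : False := by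
  rcases Ne.lt_or_gt hij with h | h
  · have h1 : s ∈ occupiedAfter α (i.val + 1) := by
      rw [occupiedAfter_succ_of_some hi]; exact Finset.mem_insert_self _ _
    have h2 : s ∈ occupiedAfter α j.val := occupiedAfter_mono α h h1
    exact carSpot_not_mem hj h2
  · have h1 : s ∈ occupiedAfter α (j.val + 1) := by
      rw [occupiedAfter_succ_of_some hj]; exact Finset.mem_insert_self _ _
    have h2 : s ∈ occupiedAfter α i.val := occupiedAfter_mono α h h1
    exact carSpot_not_mem hi h2

lemma occ_of_lucky (α : Fin n → Fin n) : ∀ (k : ℕ), k ≤ n →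
    (∀ j : Fin n, j.val < k → carSpot α j = some (α j)) →
    occupiedAfter α k = (Finset.univ.filter (fun j : Fin n => j.val < k)).image α := by
  intro k
  induction k with
  | zero =>
    intro _ _
    simp [occupiedAfter]
  | succ k ih =>
    intro hk h
    have hk' : k < n := hk
    set i : Fin n := ⟨k, hk'⟩ with hi
    have hocc := ih (le_of_lt hk') (fun j hj => h j (Nat.lt_succ_of_lt hj))
    rw [show k + 1 = i.val + 1 from rfl, occupiedAfter_succ_of_some (h i (Nat.lt_succ_self k)),
      hocc]
    have hins : (Finset.univ.filter (fun j : Fin n => j.val < k + 1))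
        = insert i (Finset.univ.filter (fun j : Fin n => j.val < k)) := by
      ext j
      simp only [mem_filter, mem_insert, mem_univ, true_and]
      constructor
      · intro hj
        rcases Nat.lt_succ_iff_lt_or_eq.mp hj with h' | h'
        · exact Or.inr h'
        · exact Or.inl (Fin.ext h')
      · rintro (rfl | hj)
        · exact Nat.lt_succ_self k
        · exact Nat.lt_succ_of_lt hj
    rw [hins, Finset.image_insert]

def Spec (α : Fin n → Fin n) (c q : Fin n) : Prop :=
  α c < q ∧ (∀ j k : Fin n, j ≠ c → k ≠ c → α j = α k → j = k) ∧
  (∀ j : Fin n, j ≠ c → α j ≠ q) ∧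
  (∀ s : Fin n, α c ≤ s → s < q → ∃ j : Fin n, j.val < c.val ∧ α j = s)

instance (α : Fin n → Fin n) (c q : Fin n) : Decidable (Spec α c q) := by
  unfold Spec; infer_instance

lemma spec_lucky_before {α : Fin n → Fin n} {c q : Fin n} (hs : Spec α c q) :
    ∀ k : ℕ, k ≤ c.val → ∀ j : Fin n, j.val < k → carSpot α j = some (α j) := by
  intro k
  induction k with
  | zero => intro _ j hj; omega
  | succ k ih =>
    intro hk j hj
    rcases Nat.lt_succ_iff_lt_or_eq.mp hj with h' | h'
    · exact ih (le_of_lt (Nat.lt_of_succ_le hk)) j h'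
    · have hjc : j.val < c.val := by omega
      have hocc : occupiedAfter α j.val
          = (Finset.univ.filter (fun j' : Fin n => j'.val < j.val)).image α :=
        occ_of_lucky α j.val (le_of_lt j.isLt)
          (fun j' hj' => ih (by omega) j' (by omega))
      unfold carSpot
      rw [hocc]
      apply nextSpot_self
      intro hmem
      simp only [Finset.mem_image, mem_filter, mem_univ, true_and] at hmem
      obtain ⟨j', hj', hαj'⟩ := hmem
      have hj'c : j' ≠ c := by
        intro e; subst e; omega
      have hjc' : j ≠ c := by
        intro e; subst e; omega
      have := hs.2.1 j' j hj'c hjc' hαj'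
      omega

lemma spec_occ_at_c {α : Fin n → Fin n} {c q : Fin n} (hs : Spec α c q) :
    occupiedAfter α c.val
      = (Finset.univ.filter (fun j : Fin n => j.val < c.val)).image α :=
  occ_of_lucky α c.val (le_of_lt c.isLt) (spec_lucky_before hs c.val le_rfl)

lemma spec_carSpot_c {α : Fin n → Fin n} {c q : Fin n} (hs : Spec α c q) :
    carSpot α c = some q := by
  unfold carSpot
  rw [spec_occ_at_c hs]
  apply nextSpot_eq_of (le_of_lt hs.1)
  · intro hmem
    simp only [Finset.mem_image, mem_filter, mem_univ, true_and] at hmem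
    obtain ⟨j, hj, hαj⟩ := hmem
    exact hs.2.2.1 j (by intro e; subst e; omega) hαj
  · intro t ht htocc
    by_contra hlt
    push_neg at hlt
    obtain ⟨j, hj, hαj⟩ := hs.2.2.2 t ht hlt
    exact htocc (Finset.mem_image.mpr ⟨j, by simp only [mem_filter, mem_univ, true_and]; exact hj, hαj⟩)

lemma spec_lucky_after {α : Fin n → Fin n} {c q : Fin n} (hs : Spec α c q) :
    ∀ k : ℕ, c.val < k → k ≤ n →
      (occupiedAfter α k
        = insert q ((Finset.univ.filter (fun j : Fin n => j.val < k ∧ j ≠ c)).image α)) ∧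
      (∀ j : Fin n, c.val < j.val → j.val < k → carSpot α j = some (α j)) := by
  intro k
  induction k with
  | zero => intro h; omega
  | succ k ih =>
    intro hck hkn
    rcases Nat.lt_or_ge c.val k with hc | hc
    · obtain ⟨hocc, hlucky⟩ := ih hc (by omega)
      have hk' : k < n := hkn
      set i : Fin n := ⟨k, hk'⟩ with hidef
      have hic : i ≠ c := by
        intro e
        have : i.val = c.val := by rw [e]
        simp only [hidef] at this
        omega
      have hfree : α i ∉ insert q
          ((Finset.univ.filter (fun j : Fin n => j.val < k ∧ j ≠ c)).image α) := by
        intro hmem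
        rcases Finset.mem_insert.mp hmem with he | hmem
        · exact hs.2.2.1 i hic he
        · simp only [Finset.mem_image, mem_filter, mem_univ, true_and] at hmem
          obtain ⟨j, ⟨hj1, hj2⟩, hαj⟩ := hmem
          have := hs.2.1 j i hj2 hic hαj
          subst this
          simp only [hidef] at hj1
          omega
      have hcs : carSpot α i = some (α i) := by
        unfold carSpot
        have : occupiedAfter α i.val = insert q
            ((Finset.univ.filter (fun j : Fin n => j.val < k ∧ j ≠ c)).image α) := hocc
        rw [this]
        exact nextSpot_self hfree
      constructor
      · rw [show k + 1 = i.val + 1 from rfl, occupiedAfter_succ_of_some hcs]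
        have : occupiedAfter α i.val = insert q
            ((Finset.univ.filter (fun j : Fin n => j.val < k ∧ j ≠ c)).image α) := hocc
        rw [this, Finset.insert_comm]
        congr 1
        have hins : (Finset.univ.filter (fun j : Fin n => j.val < k + 1 ∧ j ≠ c))
            = insert i (Finset.univ.filter (fun j : Fin n => j.val < k ∧ j ≠ c)) := by
          ext j
          simp only [mem_filter, mem_insert, mem_univ, true_and]
          constructor
          · rintro ⟨hj1, hj2⟩
            rcases Nat.lt_succ_iff_lt_or_eq.mp hj1 with h' | h'
            · exact Or.inr ⟨h', hj2⟩
            · exact Or.inl (Fin.ext h')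
          · rintro (rfl | ⟨hj1, hj2⟩)
            · exact ⟨Nat.lt_succ_self k, hic⟩
            · exact ⟨Nat.lt_succ_of_lt hj1, hj2⟩
        rw [hins, Finset.image_insert]
      · intro j h1 h2
        rcases Nat.lt_succ_iff_lt_or_eq.mp h2 with h' | h'
        · exact hlucky j h1 h'
        · have : j = i := Fin.ext h'
          subst this
          exact hcs
    · have hck' : c.val = k := by omega
      have hocc1 : occupiedAfter α (k + 1) = insert q
          ((Finset.univ.filter (fun j : Fin n => j.val < c.val)).image α) := by
        rw [show k + 1 = c.val + 1 by omega, occupiedAfter_succ_of_some (spec_carSpot_c hs),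
          spec_occ_at_c hs]
      constructor
      · rw [hocc1]
        congr 2
        ext j
        simp only [mem_filter, mem_univ, true_and]
        constructor
        · intro hj
          refine ⟨by omega, ?_⟩
          intro e; subst e; omega
        · rintro ⟨hj1, hj2⟩
          have : j.val ≠ c.val := fun e => hj2 (Fin.ext e)
          omega
      · intro j h1 h2
        omega

lemma spec_carSpot_of_ne {α : Fin n → Fin n} {c q : Fin n} (hs : Spec α c q)
    {j : Fin n} (hj : j ≠ c) : carSpot α j = some (α j) := by
  rcases Nat.lt_trichotomy j.val c.val with h | h | h
  · exact spec_lucky_before hs c.val le_rfl j h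
  · exact absurd (Fin.ext h) hj
  · exact (spec_lucky_after hs n c.isLt le_rfl).2 j h j.isLt

lemma spec_unique {α : Fin n → Fin n} {c q c' q' : Fin n}
    (h1 : Spec α c q) (h2 : Spec α c' q') : c = c' ∧ q = q' := by
  have hcc : c = c' := by
    by_contra hne
    have hl := spec_carSpot_of_ne h2 hne
    have hc := spec_carSpot_c h1
    rw [hl] at hc
    injection hc with hc
    exact absurd hc (ne_of_lt h1.1)
  subst hcc
  have := spec_carSpot_c h1
  rw [spec_carSpot_c h2] at this
  injection this with this
  exact ⟨rfl, this.symm⟩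

lemma spec_good {α : Fin n → Fin n} {c q : Fin n} (hs : Spec α c q) :
    (luckyCount α : ℤ) = (n : ℤ) - 1 ∧ ∀ i : Fin n, (carSpot α i).isSome := by
  have hn1 : 1 ≤ n := c.pos
  have hfe : (Finset.univ.filter (fun i : Fin n => carSpot α i = some (α i)))
      = Finset.univ.erase c := by
    ext j
    simp only [mem_filter, mem_univ, true_and, Finset.mem_erase, and_true]
    constructor
    · intro hj
      intro e
      subst e
      rw [spec_carSpot_c hs] at hj
      injection hj with hj
      exact absurd hj (ne_of_gt hs.1)
    · intro hj
      exact spec_carSpot_of_ne hs hj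
  have hcard : luckyCount α = n - 1 := by
    unfold luckyCount
    rw [hfe, Finset.card_erase_of_mem (Finset.mem_univ c), Finset.card_univ, Fintype.card_fin]
  constructor
  · rw [hcard]
    push_cast [Nat.cast_sub hn1]
    ring
  · intro i
    rcases eq_or_ne i c with rfl | hne
    · rw [spec_carSpot_c hs]; rfl
    · rw [spec_carSpot_of_ne hs hne]; rfl

lemma good_spec {α : Fin n → Fin n} (hn : 2 ≤ n)
    (hg : (luckyCount α : ℤ) = (n : ℤ) - 1) (hp : ∀ i : Fin n, (carSpot α i).isSome) :
    ∃ c q : Fin n, Spec α c q := by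
  have hn1 : 1 ≤ n := by omega
  have hcard : luckyCount α = n - 1 := by
    have : (luckyCount α : ℤ) = ((n - 1 : ℕ) : ℤ) := by
      rw [Nat.cast_sub hn1]; push_cast; linarith
    exact_mod_cast this
  set L := Finset.univ.filter (fun i : Fin n => carSpot α i = some (α i)) with hL
  have hU : (Finset.univ.filter (fun i : Fin n => ¬ carSpot α i = some (α i))).card = 1 := by
    have := Finset.card_filter_add_card_filter_not
      (s := (Finset.univ : Finset (Fin n)))
      (p := fun i : Fin n => carSpot α i = some (α i))
    rw [Finset.card_univ, Fintype.card_fin] at this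
    rw [← hL] at this
    have hL' : L.card = n - 1 := hcard
    omega
  obtain ⟨c, hc⟩ := Finset.card_eq_one.mp hU
  have hcmem : c ∈ Finset.univ.filter (fun i : Fin n => ¬ carSpot α i = some (α i)) := by
    rw [hc]; exact Finset.mem_singleton_self c
  simp only [mem_filter, mem_univ, true_and] at hcmem
  have hlucky : ∀ j : Fin n, j ≠ c → carSpot α j = some (α j) := by
    intro j hj
    by_contra hnl
    have : j ∈ Finset.univ.filter (fun i : Fin n => ¬ carSpot α i = some (α i)) := by
      simp [hnl]
    rw [hc, Finset.mem_singleton] at this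
    exact hj this
  obtain ⟨q, hq⟩ := Option.isSome_iff_exists.mp (hp c)
  have hq1 := nextSpot_eq_some (show nextSpot (occupiedAfter α c.val) (α c) = some q from hq)
  refine ⟨c, q, ?_, ?_, ?_, ?_⟩
  · rcases lt_or_eq_of_le hq1.1 with h | h
    · exact h
    · exfalso; apply hcmem; rw [hq, h]
  · intro j k hj hk hjk
    by_contra hne
    exact carSpot_distinct hne (hlucky j hj) (by rw [hlucky k hk, hjk])
  · intro j hj he
    exact carSpot_distinct hj (by rw [hlucky j hj, he]) hq
  · intro s hs1 hs2
    have hocc : occupiedAfter α c.val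
        = (Finset.univ.filter (fun j : Fin n => j.val < c.val)).image α :=
      occ_of_lucky α c.val (le_of_lt c.isLt)
        (fun j hj => hlucky j (by intro e; subst e; omega))
    have hsocc : s ∈ occupiedAfter α c.val := by
      by_contra hfree
      have := hq1.2.2 s hs1 hfree
      omega
    rw [hocc] at hsocc
    simp only [Finset.mem_image, mem_filter, mem_univ, true_and] at hsocc
    obtain ⟨j, hj, hαj⟩ := hsocc
    exact ⟨j, hj, hαj⟩

lemma countInj (s t : Finset (Fin n)) (f₀ : Fin n → Fin n) :
    (Finset.univ.filter (fun f : Fin n → Fin n =>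
      (∀ x, x ∉ s → f x = f₀ x) ∧ (∀ x ∈ s, ∀ y ∈ s, f x = f y → x = y) ∧
      ∀ x ∈ s, f x ∈ t)).card
      = t.card.descFactorial s.card := by
  classical
  induction s using Finset.induction_on generalizing t f₀ with
  | empty =>
    have : (Finset.univ.filter (fun f : Fin n → Fin n =>
        (∀ x, x ∉ (∅ : Finset (Fin n)) → f x = f₀ x) ∧
        (∀ x ∈ (∅ : Finset (Fin n)), ∀ y ∈ (∅ : Finset (Fin n)), f x = f y → x = y) ∧
        ∀ x ∈ (∅ : Finset (Fin n)), f x ∈ t)) = {f₀} := by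
      ext f
      constructor
      · intro hf
        rw [mem_filter] at hf
        rw [Finset.mem_singleton]
        funext x
        exact hf.2.1 x (Finset.notMem_empty x)
      · intro hf
        rw [Finset.mem_singleton] at hf
        subst hf
        rw [mem_filter]
        exact ⟨Finset.mem_univ _, fun _ _ => rfl,
          fun x hx => absurd hx (Finset.notMem_empty x),
          fun x hx => absurd hx (Finset.notMem_empty x)⟩
    rw [this, Finset.card_singleton, Finset.card_empty, Nat.descFactorial_zero]
  | @insert a s' ha ih =>
    rw [Finset.card_eq_sum_card_fiberwise
      (f := fun f : Fin n → Fin n => f a) (t := t)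
      (fun f hf => by
        simp only [Finset.mem_coe, mem_filter, mem_univ, true_and] at hf
        exact hf.2.2 a (Finset.mem_insert_self a s'))]
    have hfib : ∀ v ∈ t,
        ((Finset.univ.filter (fun f : Fin n → Fin n =>
          (∀ x, x ∉ insert a s' → f x = f₀ x) ∧
          (∀ x ∈ insert a s', ∀ y ∈ insert a s', f x = f y → x = y) ∧
          ∀ x ∈ insert a s', f x ∈ t)).filter (fun f => f a = v)).card
        = (t.erase v).card.descFactorial s'.card := by
      intro v hv
      rw [Finset.filter_filter]
      rw [← ih (t.erase v) (Function.update f₀ a v)]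
      congr 1
      ext f
      simp only [mem_filter, mem_univ, true_and]
      constructor
      · rintro ⟨⟨h1, h2, h3⟩, hfa⟩
        refine ⟨?_, ?_, ?_⟩
        · intro x hx
          rcases eq_or_ne x a with rfl | hxa
          · rw [hfa, Function.update_self]
          · rw [Function.update_of_ne hxa]
            exact h1 x (by simp [hxa, hx])
        · intro x hx y hy hxy
          exact h2 x (Finset.mem_insert_of_mem hx) y (Finset.mem_insert_of_mem hy) hxy
        · intro x hx
          rw [Finset.mem_erase]
          refine ⟨?_, h3 x (Finset.mem_insert_of_mem hx)⟩
          intro he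
          have hxa : x ≠ a := by rintro rfl; exact ha hx
          exact hxa (h2 x (Finset.mem_insert_of_mem hx) a (Finset.mem_insert_self a s')
            (by rw [he, hfa]))
      · rintro ⟨h1, h2, h3⟩
        have hfa : f a = v := by
          rw [h1 a ha, Function.update_self]
        refine ⟨⟨?_, ?_, ?_⟩, hfa⟩
        · intro x hx
          simp only [Finset.mem_insert, not_or] at hx
          rw [h1 x hx.2, Function.update_of_ne hx.1]
        · intro x hx y hy hxy
          rcases Finset.mem_insert.mp hx with rfl | hx'
          · rcases Finset.mem_insert.mp hy with rfl | hy'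
            · rfl
            · exfalso
              have := h3 y hy'
              rw [Finset.mem_erase, ← hfa] at this
              exact this.1 hxy.symm
          · rcases Finset.mem_insert.mp hy with rfl | hy'
            · exfalso
              have := h3 x hx'
              rw [Finset.mem_erase, ← hfa] at this
              exact this.1 hxy
            · exact h2 x hx' y hy' hxy
        · intro x hx
          rcases Finset.mem_insert.mp hx with rfl | hx'
          · rw [hfa]; exact hv
          · exact Finset.mem_of_mem_erase (h3 x hx')
    rw [Finset.sum_congr rfl hfib]
    have hconst : ∀ v ∈ t, (t.erase v).card.descFactorial s'.card
        = (t.card - 1).descFactorial s'.card := by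
      intro v hv
      rw [Finset.card_erase_of_mem hv]
    rw [Finset.sum_congr rfl hconst, Finset.sum_const, smul_eq_mul,
      Finset.card_insert_of_notMem ha]
    rcases Nat.eq_zero_or_pos t.card with h0 | hpos
    · rw [h0]
      simp [Nat.descFactorial]
    · obtain ⟨m, hm⟩ := Nat.exists_eq_succ_of_ne_zero (Nat.pos_iff_ne_zero.mp hpos)
      rw [hm]
      simp only [Nat.succ_sub_one]
      rw [Nat.succ_descFactorial_succ]

noncomputable def psi {n : ℕ} (c p q : Fin n) (α : Fin n → Fin n) (s : Fin n) : Fin n :=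
  haveI : Nonempty (Fin n) := ⟨c⟩
  if s ∈ Finset.Ico p q then Function.invFunOn α {j : Fin n | j.val < c.val} s else c

lemma count_Tcqp (c q p : Fin n) (hpq : p < q) :
    (Finset.univ.filter (fun α : Fin n → Fin n => Spec α c q ∧ α c = p)).card
      = (c.val).descFactorial (q.val - p.val)
        * Nat.factorial (n - 1 - (q.val - p.val)) := by
  classical
  haveI : Nonempty (Fin n) := ⟨c⟩
  have hqI : q ∉ Finset.Ico p q := by simp [Finset.mem_Ico]
  -- the target fiber index set
  set E := Finset.univ.filter (fun e : Fin n → Fin n =>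
      (∀ x, x ∉ Finset.Ico p q → e x = (fun _ : Fin n => c) x) ∧
      (∀ x ∈ Finset.Ico p q, ∀ y ∈ Finset.Ico p q, e x = e y → x = y) ∧
      ∀ x ∈ Finset.Ico p q, e x ∈ Finset.Iio c) with hEdef
  have hEcard : E.card = (c.val).descFactorial (q.val - p.val) := by
    rw [hEdef, countInj, Fin.card_Iio, Fin.card_Ico]
  have hmaps : ∀ α ∈ Finset.univ.filter
      (fun α : Fin n → Fin n => Spec α c q ∧ α c = p),
      psi c p q α ∈ E := by
    intro α hα
    simp only [mem_filter, mem_univ, true_and] at hα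
    obtain ⟨hspec, hαc⟩ := hα
    have hkey : ∀ s ∈ Finset.Ico p q,
        (Function.invFunOn α {j : Fin n | j.val < c.val} s).val < c.val ∧
        α (Function.invFunOn α {j : Fin n | j.val < c.val} s) = s := by
      intro s hs
      rw [Finset.mem_Ico] at hs
      obtain ⟨j, hj, hαj⟩ := hspec.2.2.2 s (by rw [hαc]; exact hs.1) hs.2
      have hex : ∃ a ∈ {j : Fin n | j.val < c.val}, α a = s := ⟨j, hj, hαj⟩
      exact ⟨Function.invFunOn_mem hex, Function.invFunOn_eq hex⟩
    rw [hEdef, mem_filter]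
    refine ⟨Finset.mem_univ _, ?_, ?_, ?_⟩
    · intro x hx
      simp only [psi, if_neg hx]
    · intro x hx y hy hxy
      simp only [psi, if_pos hx, if_pos hy] at hxy
      have h1 := (hkey x hx).2
      have h2 := (hkey y hy).2
      rw [← h1, ← h2, hxy]
    · intro x hx
      simp only [psi, if_pos hx, Finset.mem_Iio]
      exact Fin.lt_def.mpr (hkey x hx).1
  rw [Finset.card_eq_sum_card_fiberwise hmaps]
  have hfib : ∀ e ∈ E,
      ((Finset.univ.filter (fun α : Fin n → Fin n => Spec α c q ∧ α c = p)).filter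
        (fun α => psi c p q α = e)).card
      = Nat.factorial (n - 1 - (q.val - p.val)) := by
    intro e he
    rw [hEdef, mem_filter] at he
    obtain ⟨-, he0, he1, he2⟩ := he
    have he2' : ∀ s ∈ Finset.Ico p q, (e s).val < c.val := by
      intro s hs
      have := he2 s hs
      rw [Finset.mem_Iio] at this
      exact Fin.lt_def.mp this
    have hesc : ∀ s ∈ Finset.Ico p q, e s ≠ c := by
      intro s hs hcon
      have := he2' s hs
      rw [hcon] at this
      omega
    have heinv : ∀ s ∈ Finset.Ico p q,
        Function.invFunOn e (↑(Finset.Ico p q) : Set (Fin n)) (e s) = s := by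
      intro s hs
      have hex : ∃ a ∈ (↑(Finset.Ico p q) : Set (Fin n)), e a = e s :=
        ⟨s, by simpa using hs, rfl⟩
      have h1 := Function.invFunOn_mem hex
      have h2 := Function.invFunOn_eq hex
      exact he1 _ (by simpa using h1) s hs h2
    set R : Finset (Fin n) :=
      Finset.univ \ insert c ((Finset.Ico p q).image e) with hRdef
    set f₀ : Fin n → Fin n := fun j =>
      if j = c then p else Function.invFunOn e (↑(Finset.Ico p q) : Set (Fin n)) j
      with hf₀def
    set t' : Finset (Fin n) := Finset.univ \ insert q (Finset.Ico p q) with ht'def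
    have hnotR : ∀ x : Fin n, x ∉ R ↔ x = c ∨ ∃ s ∈ Finset.Ico p q, e s = x := by
      intro x
      constructor
      · intro h
        have hA : x ∈ insert c ((Finset.Ico p q).image e) := by
          by_contra hA
          exact h (Finset.mem_sdiff.mpr ⟨Finset.mem_univ x, hA⟩)
        rcases Finset.mem_insert.mp hA with h' | h'
        · exact Or.inl h'
        · obtain ⟨s, hs, hes⟩ := Finset.mem_image.mp h'
          exact Or.inr ⟨s, hs, hes⟩
      · intro h hR
        rw [hRdef, Finset.mem_sdiff] at hR
        apply hR.2
        rcases h with rfl | ⟨s, hs, hes⟩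
        · exact Finset.mem_insert_self _ _
        · exact Finset.mem_insert_of_mem (Finset.mem_image.mpr ⟨s, hs, hes⟩)
    have hcR : c ∉ R := by rw [hnotR]; exact Or.inl rfl
    have heR : ∀ s ∈ Finset.Ico p q, e s ∉ R := by
      intro s hs
      rw [hnotR]
      exact Or.inr ⟨s, hs, rfl⟩
    have hmemt' : ∀ x : Fin n, x ∈ t' ↔ x ≠ q ∧ x ∉ Finset.Ico p q := by
      intro x
      rw [ht'def, Finset.mem_sdiff, Finset.mem_insert]
      simp only [Finset.mem_univ, true_and, not_or]
    have hfeq : (Finset.univ.filter (fun α : Fin n → Fin n => Spec α c q ∧ α c = p)).filter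
        (fun α => psi c p q α = e)
        = Finset.univ.filter (fun α : Fin n → Fin n =>
          (∀ x, x ∉ R → α x = f₀ x) ∧ (∀ x ∈ R, ∀ y ∈ R, α x = α y → x = y) ∧
          ∀ x ∈ R, α x ∈ t') := by
      ext α
      simp only [Finset.filter_filter, mem_filter, mem_univ, true_and]
      constructor
      · rintro ⟨⟨hspec, hαc⟩, hΨ⟩
        have hes : ∀ s ∈ Finset.Ico p q, α (e s) = s := by
          intro s hs
          have hse : e s = Function.invFunOn α {j : Fin n | j.val < c.val} s := by
            rw [← congrFun hΨ s]
            simp only [psi, if_pos hs]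
          rw [Finset.mem_Ico] at hs
          obtain ⟨j, hj, hαj⟩ := hspec.2.2.2 s (by rw [hαc]; exact hs.1) hs.2
          have hex : ∃ a ∈ {j : Fin n | j.val < c.val}, α a = s := ⟨j, hj, hαj⟩
          rw [hse]
          exact Function.invFunOn_eq hex
        refine ⟨?_, ?_, ?_⟩
        · intro x hx
          rcases (hnotR x).mp hx with rfl | ⟨s, hs, rfl⟩
          · rw [hαc, hf₀def]; simp
          · rw [hf₀def]
            simp only [if_neg (hesc s hs)]
            rw [heinv s hs]
            exact hes s hs
        · intro x hx y hy hxy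
          have hxc : x ≠ c := by rintro rfl; exact hcR hx
          have hyc : y ≠ c := by rintro rfl; exact hcR hy
          exact hspec.2.1 x y hxc hyc hxy
        · intro x hx
          have hxc : x ≠ c := by rintro rfl; exact hcR hx
          rw [hmemt']
          constructor
          · exact hspec.2.2.1 x hxc
          · intro hαx
            have h1 : α (e (α x)) = α x := hes (α x) hαx
            have h2 : e (α x) ≠ c := hesc (α x) hαx
            have := hspec.2.1 x (e (α x)) hxc h2 h1.symm
            rw [this] at hx
            exact heR (α x) hαx hx
      · rintro ⟨h0, h1, h2⟩
        have hαc : α c = p := by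
          rw [h0 c hcR, hf₀def]; simp
        have hαe : ∀ s ∈ Finset.Ico p q, α (e s) = s := by
          intro s hs
          rw [h0 (e s) (heR s hs), hf₀def]
          simp only [if_neg (hesc s hs)]
          exact heinv s hs
        have hinj : ∀ x y : Fin n, x ≠ c → y ≠ c → α x = α y → x = y := by
          intro x y hxc hyc hxy
          by_cases hxR : x ∈ R
          · by_cases hyR : y ∈ R
            · exact h1 x hxR y hyR hxy
            · rcases (hnotR y).mp hyR with rfl | ⟨s, hs, rfl⟩
              · exact absurd rfl hyc
              · exfalso
                have h3 := (hmemt' (α x)).mp (h2 x hxR)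
                rw [hxy, hαe s hs] at h3
                exact h3.2 hs
          · rcases (hnotR x).mp hxR with rfl | ⟨s, hs, rfl⟩
            · exact absurd rfl hxc
            · by_cases hyR : y ∈ R
              · exfalso
                have h3 := (hmemt' (α y)).mp (h2 y hyR)
                rw [← hxy, hαe s hs] at h3
                exact h3.2 hs
              · rcases (hnotR y).mp hyR with rfl | ⟨s', hs', rfl⟩
                · exact absurd rfl hyc
                · rw [hαe s hs, hαe s' hs'] at hxy
                  rw [hxy]
        have hspec : Spec α c q := by
          refine ⟨?_, hinj, ?_, ?_⟩
          · rw [hαc]; exact hpq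
          · intro j hj
            by_cases hjR : j ∈ R
            · have h3 := (hmemt' (α j)).mp (h2 j hjR)
              exact h3.1
            · rcases (hnotR j).mp hjR with rfl | ⟨s, hs, rfl⟩
              · exact absurd rfl hj
              · rw [hαe s hs]
                intro hcon
                rw [hcon] at hs
                exact hqI hs
          · intro s hs1 hs2
            have hsI : s ∈ Finset.Ico p q := by
              rw [Finset.mem_Ico]
              rw [hαc] at hs1
              exact ⟨hs1, hs2⟩
            exact ⟨e s, he2' s hsI, hαe s hsI⟩
        refine ⟨⟨hspec, hαc⟩, ?_⟩
        funext s
        by_cases hs : s ∈ Finset.Ico p q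
        · simp only [psi, if_pos hs]
          have hex : ∃ a ∈ {j : Fin n | j.val < c.val}, α a = s :=
            ⟨e s, he2' s hs, hαe s hs⟩
          have hm := Function.invFunOn_mem hex
          have heq := Function.invFunOn_eq hex
          have hmc : Function.invFunOn α {j : Fin n | j.val < c.val} s ≠ c := by
            intro hcon
            have : (Function.invFunOn α {j : Fin n | j.val < c.val} s).val < c.val := hm
            rw [hcon] at this
            omega
          have := hinj _ (e s) hmc (hesc s hs) (by rw [heq, hαe s hs])
          rw [this]
        · simp only [psi, if_neg hs]
          rw [he0 s hs]
      -- end ext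
    rw [hfeq, countInj R t' f₀]
    have hinje : Set.InjOn e ↑(Finset.Ico p q) := by
      intro x hx y hy hxy
      exact he1 x (by simpa using hx) y (by simpa using hy) hxy
    have himcard : ((Finset.Ico p q).image e).card = q.val - p.val := by
      rw [Finset.card_image_of_injOn hinje, Fin.card_Ico]
    have hcim : c ∉ (Finset.Ico p q).image e := by
      intro hmem
      rw [Finset.mem_image] at hmem
      obtain ⟨s, hs, hes⟩ := hmem
      exact hesc s hs hes
    have hRcard : R.card = n - (q.val - p.val + 1) := by
      rw [hRdef, Finset.card_sdiff_of_subset (Finset.subset_univ _), Finset.card_univ, Fintype.card_fin,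
        Finset.card_insert_of_notMem hcim, himcard]
    have ht'card : t'.card = n - (q.val - p.val + 1) := by
      rw [ht'def, Finset.card_sdiff_of_subset (Finset.subset_univ _), Finset.card_univ, Fintype.card_fin,
        Finset.card_insert_of_notMem hqI, Fin.card_Ico]
    rw [hRcard, ht'card, Nat.descFactorial_self]
    congr 1
    omega
  rw [Finset.sum_congr rfl hfib, Finset.sum_const, smul_eq_mul, hEcard]

lemma count_Tcq (c q : Fin n) :
    (Finset.univ.filter (fun α : Fin n → Fin n => Spec α c q)).card
      = ∑ p ∈ Finset.Iio q,
          (c.val).descFactorial (q.val - p.val)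
            * Nat.factorial (n - 1 - (q.val - p.val)) := by
  classical
  rw [Finset.card_eq_sum_card_fiberwise (f := fun α : Fin n → Fin n => α c)
    (t := Finset.Iio q)
    (fun α hα => by
      simp only [Finset.mem_coe, mem_filter, mem_univ, true_and] at hα
      exact Finset.mem_Iio.mpr hα.1)]
  refine Finset.sum_congr rfl fun p hp => ?_
  rw [Finset.filter_filter]
  exact count_Tcqp c q p (Finset.mem_Iio.mp hp)

lemma T_card (hn : 2 ≤ n) :
    (Finset.univ.filter (fun α : Fin n → Fin n =>
        (luckyCount α : ℤ) = (n : ℤ) - 1 ∧ ∀ i : Fin n, (carSpot α i).isSome)).card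
      = ∑ cq ∈ (Finset.univ ×ˢ Finset.univ : Finset (Fin n × Fin n)),
          (Finset.univ.filter (fun α : Fin n → Fin n => Spec α cq.1 cq.2)).card := by
  classical
  have hset : (Finset.univ.filter (fun α : Fin n → Fin n =>
        (luckyCount α : ℤ) = (n : ℤ) - 1 ∧ ∀ i : Fin n, (carSpot α i).isSome))
      = (Finset.univ ×ˢ Finset.univ : Finset (Fin n × Fin n)).biUnion
          (fun cq => Finset.univ.filter (fun α : Fin n → Fin n => Spec α cq.1 cq.2)) := by
    ext α
    simp only [mem_filter, mem_univ, true_and, Finset.mem_biUnion, Finset.mem_product]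
    constructor
    · rintro ⟨h1, h2⟩
      obtain ⟨c, q, hs⟩ := good_spec hn h1 h2
      exact ⟨(c, q), hs⟩
    · intro h
      obtain ⟨cq, hs⟩ := h
      exact spec_good hs
  rw [hset, Finset.card_biUnion]
  intro x hx y hy hxy
  rw [Function.onFun, Finset.disjoint_left]
  intro α hαx hαy
  simp only [mem_filter, mem_univ, true_and] at hαx hαy
  obtain ⟨h1, h2⟩ := spec_unique hαx hαy
  exact hxy (Prod.ext h1 h2)

lemma sum_Iio_val (q : Fin n) (g : ℕ → ℕ) :
    ∑ p ∈ Finset.Iio q, g p.val = ∑ p ∈ Finset.range q.val, g p := by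
  have himg : Finset.range q.val = (Finset.Iio q).image Fin.val := by
    ext x
    simp only [Finset.mem_range, Finset.mem_image, Finset.mem_Iio]
    constructor
    · intro hx
      exact ⟨⟨x, lt_trans hx q.isLt⟩, Fin.lt_def.mpr hx, rfl⟩
    · rintro ⟨p, hp, rfl⟩
      exact Fin.lt_def.mp hp
  rw [himg, Finset.sum_image (fun x _ y _ e => Fin.val_injective e)]

lemma tri_sum (g : ℕ → ℕ) : ∀ N : ℕ,
    ∑ q ∈ Finset.range N, ∑ p ∈ Finset.range q, g (q - p)
      = ∑ m ∈ Finset.range N, (N - 1 - m) * g (m + 1) := by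
  intro N
  induction N with
  | zero => simp
  | succ N ih =>
    rw [Finset.sum_range_succ, ih]
    have h1 : ∑ p ∈ Finset.range N, g (N - p) = ∑ m ∈ Finset.range N, g (m + 1) := by
      rw [← Finset.sum_range_reflect]
      apply Finset.sum_congr rfl
      intro p hp
      rw [Finset.mem_range] at hp
      congr 1
      omega
    rw [h1]
    have h3 : ∑ m ∈ Finset.range (N + 1), (N + 1 - 1 - m) * g (m + 1)
        = ∑ m ∈ Finset.range N, ((N - 1 - m) * g (m + 1) + g (m + 1)) := by
      rw [Finset.sum_range_succ]
      have hz : (N + 1 - 1 - N) * g (N + 1) = 0 := by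
        have : N + 1 - 1 - N = 0 := by omega
        rw [this, Nat.zero_mul]
      rw [hz, Nat.add_zero]
      apply Finset.sum_congr rfl
      intro m hm
      rw [Finset.mem_range] at hm
      have : N + 1 - 1 - m = (N - 1 - m) + 1 := by omega
      rw [this, Nat.succ_mul]
    rw [h3, Finset.sum_add_distrib]

lemma rhs_eq (hn : 2 ≤ n) :
    ∑ c ∈ Finset.range n, ∑ m ∈ Finset.range n,
      (n - 1 - m) * (c.descFactorial (m + 1) * Nat.factorial (n - 1 - (m + 1)))
    = ∑ i ∈ Finset.Icc 2 n, ∑ ℓ ∈ Finset.range i,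
        (i - 1 - ℓ) * Nat.choose (i - 1) ℓ * Nat.factorial ℓ
          * Nat.choose (n - ℓ - 1) (i - 1 - ℓ) * Nat.factorial (i - 1 - ℓ)
          * Nat.factorial (n - i) := by
  obtain ⟨N, rfl⟩ : ∃ N, n = N + 2 := ⟨n - 2, by omega⟩
  -- right side: reindex i = j + 2
  rw [← Finset.Ico_add_one_right_eq_Icc, Finset.sum_Ico_eq_sum_range]
  have hcount : N + 2 + 1 - 2 = N + 1 := by omega
  rw [hcount]
  -- left side: drop c = 0 and reindex c = j + 1
  rw [show N + 2 = (N + 1) + 1 from rfl, Finset.sum_range_succ']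
  have hzero : ∑ m ∈ Finset.range (N + 1 + 1),
      (N + 1 + 1 - 1 - m) * (Nat.descFactorial 0 (m + 1)
        * Nat.factorial (N + 1 + 1 - 1 - (m + 1))) = 0 := by
    apply Finset.sum_eq_zero
    intro m _
    rw [Nat.zero_descFactorial_succ, Nat.zero_mul, Nat.mul_zero]
  rw [hzero, Nat.add_zero]
  apply Finset.sum_congr rfl
  intro j hj
  rw [Finset.mem_range] at hj
  have e1 : 2 + j - 1 = j + 1 := by omega
  have hsub : Finset.range (2 + j) ⊆ Finset.range (N + 1 + 1) :=
    Finset.range_subset_range.mpr (by omega)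
  rw [Finset.sum_subset hsub (fun ℓ _ hℓ => by
    rw [Finset.mem_range, not_lt] at hℓ
    rw [e1, Nat.choose_eq_zero_of_lt (show j + 1 < ℓ by omega)]
    simp)]
  apply Finset.sum_congr rfl
  intro ℓ hℓ
  rw [Finset.mem_range] at hℓ
  rcases Nat.lt_or_ge ℓ (j + 1) with hlt | hge
  · rw [e1]
    have e4 : Nat.choose (j + 1) ℓ * Nat.factorial ℓ = Nat.descFactorial (j + 1) ℓ := by
      rw [Nat.descFactorial_eq_factorial_mul_choose, Nat.mul_comm]
    have e5 : Nat.choose (N + 1 + 1 - ℓ - 1) (j + 1 - ℓ) * Nat.factorial (j + 1 - ℓ)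
        = Nat.descFactorial (N + 1 + 1 - ℓ - 1) (j + 1 - ℓ) := by
      rw [Nat.descFactorial_eq_factorial_mul_choose, Nat.mul_comm]
    have e6 : Nat.descFactorial (N + 1 + 1 - ℓ - 1) (j + 1 - ℓ)
          * Nat.factorial (N + 1 + 1 - (2 + j))
        = Nat.factorial (N + 1 + 1 - ℓ - 1) := by
      have h7 : N + 1 + 1 - (2 + j) = N + 1 + 1 - ℓ - 1 - (j + 1 - ℓ) := by omega
      rw [h7, Nat.mul_comm]
      exact Nat.factorial_mul_descFactorial (by omega)
    have e8 : (N + 1 + 1 - 1 - ℓ) * Nat.factorial (N + 1 + 1 - 1 - (ℓ + 1))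
        = Nat.factorial (N + 1 + 1 - ℓ - 1) := by
      have h9 : N + 1 + 1 - ℓ - 1 = (N + 1 + 1 - 1 - (ℓ + 1)) + 1 := by omega
      have h10 : N + 1 + 1 - 1 - ℓ = (N + 1 + 1 - 1 - (ℓ + 1)) + 1 := by omega
      rw [h9, h10, Nat.factorial_succ]
    calc (N + 1 + 1 - 1 - ℓ) * (Nat.descFactorial (j + 1) (ℓ + 1)
          * Nat.factorial (N + 1 + 1 - 1 - (ℓ + 1)))
        = (j + 1 - ℓ) * Nat.descFactorial (j + 1) ℓ
            * ((N + 1 + 1 - 1 - ℓ) * Nat.factorial (N + 1 + 1 - 1 - (ℓ + 1))) := by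
          rw [Nat.descFactorial_succ]; ring
      _ = (j + 1 - ℓ) * Nat.descFactorial (j + 1) ℓ
            * Nat.factorial (N + 1 + 1 - ℓ - 1) := by rw [e8]
      _ = (j + 1 - ℓ) * Nat.descFactorial (j + 1) ℓ
            * (Nat.descFactorial (N + 1 + 1 - ℓ - 1) (j + 1 - ℓ)
              * Nat.factorial (N + 1 + 1 - (2 + j))) := by rw [e6]
      _ = (j + 1 - ℓ) * (Nat.choose (j + 1) ℓ * Nat.factorial ℓ)
            * ((Nat.choose (N + 1 + 1 - ℓ - 1) (j + 1 - ℓ) * Nat.factorial (j + 1 - ℓ))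
              * Nat.factorial (N + 1 + 1 - (2 + j))) := by rw [e4, e5]
      _ = (j + 1 - ℓ) * Nat.choose (j + 1) ℓ * Nat.factorial ℓ
            * Nat.choose (N + 1 + 1 - ℓ - 1) (j + 1 - ℓ) * Nat.factorial (j + 1 - ℓ)
            * Nat.factorial (N + 1 + 1 - (2 + j)) := by ring
  · rw [e1]
    have hdesc : Nat.descFactorial (j + 1) (ℓ + 1) = 0 :=
      Nat.descFactorial_eq_zero_iff_lt.mpr (by omega)
    have hz2 : j + 1 - ℓ = 0 := by omega
    rw [hdesc, hz2]
    simp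

end CUP

/-- For `n ≥ 2`, the number of preference lists in `[n]^n` with exactly `n-1` lucky
cars in which the unique unlucky car is able to park (so every car parks) equals
`∑_{i=2}^n ∑_{ℓ=0}^{i-1} (i-1-ℓ) C(i-1,ℓ) ℓ! C(n-ℓ-1,i-1-ℓ) (i-1-ℓ)! (n-i)!`. -/
theorem count_unlucky_parks (n : ℕ) (hn : 2 ≤ n) :
    (Finset.univ.filter (fun α : Fin n → Fin n =>
        (luckyCount α : ℤ) = (n : ℤ) - 1 ∧ ∀ i : Fin n, (carSpot α i).isSome)).card
      = ∑ i ∈ Finset.Icc 2 n, ∑ ℓ ∈ Finset.range i,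
          (i - 1 - ℓ) * Nat.choose (i - 1) ℓ * Nat.factorial ℓ
            * Nat.choose (n - ℓ - 1) (i - 1 - ℓ) * Nat.factorial (i - 1 - ℓ)
            * Nat.factorial (n - i) := by
  classical
  rw [CUP.T_card hn, Finset.sum_product]
  have h1 : ∀ c q : Fin n,
      (Finset.univ.filter (fun α : Fin n → Fin n => CUP.Spec α c q)).card
        = ∑ p ∈ Finset.range q.val,
            (c.val).descFactorial (q.val - p) * Nat.factorial (n - 1 - (q.val - p)) := by
    intro c q
    rw [CUP.count_Tcq c q]
    exact CUP.sum_Iio_val q (fun v =>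
      (c.val).descFactorial (q.val - v) * Nat.factorial (n - 1 - (q.val - v)))
  calc ∑ c : Fin n, ∑ q : Fin n,
        (Finset.univ.filter (fun α : Fin n → Fin n => CUP.Spec α c q)).card
      = ∑ c : Fin n, ∑ q : Fin n, ∑ p ∈ Finset.range q.val,
          (c.val).descFactorial (q.val - p) * Nat.factorial (n - 1 - (q.val - p)) := by
        exact Finset.sum_congr rfl fun c _ => Finset.sum_congr rfl fun q _ => h1 c q
    _ = ∑ c : Fin n, ∑ q ∈ Finset.range n, ∑ p ∈ Finset.range q,
          (c.val).descFactorial (q - p) * Nat.factorial (n - 1 - (q - p)) := by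
        exact Finset.sum_congr rfl fun c _ =>
          Fin.sum_univ_eq_sum_range (fun qv => ∑ p ∈ Finset.range qv,
            (c.val).descFactorial (qv - p) * Nat.factorial (n - 1 - (qv - p))) n
    _ = ∑ c ∈ Finset.range n, ∑ q ∈ Finset.range n, ∑ p ∈ Finset.range q,
          c.descFactorial (q - p) * Nat.factorial (n - 1 - (q - p)) := by
        exact Fin.sum_univ_eq_sum_range (fun cv => ∑ q ∈ Finset.range n,
          ∑ p ∈ Finset.range q,
            cv.descFactorial (q - p) * Nat.factorial (n - 1 - (q - p))) n
    _ = ∑ c ∈ Finset.range n, ∑ m ∈ Finset.range n,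
          (n - 1 - m) * (c.descFactorial (m + 1) * Nat.factorial (n - 1 - (m + 1))) := by
        exact Finset.sum_congr rfl fun c _ => CUP.tri_sum
          (fun m => c.descFactorial m * Nat.factorial (n - 1 - m)) n
    _ = _ := CUP.rhs_eq hn
end

section
/- For all natural numbers n and i with 2 ≤ i ≤ n, the following sums are equal: ∑_{i=2}^n ∑_{ℓ=1}^{i−1} ℓ·C(i−1,ℓ)·ℓ!·C(n−ℓ−1, i−1−ℓ)·(i−1−ℓ)!·C(n−i+1, n−i)·(n−i)! = ∑_{i=2}^n ∑_{ℓ=0}^{i−1} (i−1−ℓ)·C(i−1,ℓ)·ℓ!·C(n−ℓ−1, i−1−ℓ)·(i−1−ℓ)!·(n−i)!, i.e., the two counting expressions in the proof of the lucky-count formula are equinumerous for every n ≥ 2. -/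
open Finset

private def T (n m ℓ : ℕ) : ℕ :=
  Nat.choose m ℓ * Nat.factorial ℓ * Nat.choose (n - ℓ - 1) (m - ℓ)
    * Nat.factorial (m - ℓ)

private lemma Tfac (n m ℓ : ℕ) (h1 : ℓ ≤ m) (h2 : m < n) :
    T n m ℓ * (Nat.factorial (m - ℓ) * Nat.factorial (n - m - 1))
      = Nat.factorial m * Nat.factorial (n - ℓ - 1) := by
  have e1 : Nat.choose m ℓ * Nat.factorial ℓ * Nat.factorial (m - ℓ)
      = Nat.factorial m := Nat.choose_mul_factorial_mul_factorial h1
  have e3 : n - ℓ - 1 - (m - ℓ) = n - m - 1 := by omega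
  have e2 : Nat.choose (n - ℓ - 1) (m - ℓ) * Nat.factorial (m - ℓ)
      * Nat.factorial (n - m - 1) = Nat.factorial (n - ℓ - 1) := by
    rw [← e3]
    exact Nat.choose_mul_factorial_mul_factorial (by omega)
  calc T n m ℓ * (Nat.factorial (m - ℓ) * Nat.factorial (n - m - 1))
      = (Nat.choose m ℓ * Nat.factorial ℓ * Nat.factorial (m - ℓ))
        * (Nat.choose (n - ℓ - 1) (m - ℓ) * Nat.factorial (m - ℓ)
          * Nat.factorial (n - m - 1)) := by unfold T; ring
    _ = Nat.factorial m * Nat.factorial (n - ℓ - 1) := by rw [e1, e2]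

private lemma step (n m ℓ : ℕ) (hl : ℓ ≤ m) (h2 : m < n) :
    (n - ℓ - 1) * T n m (ℓ + 1) = (m - ℓ) * T n m ℓ := by
  rcases eq_or_lt_of_le hl with rfl | hlt
  · have : Nat.choose ℓ (ℓ + 1) = 0 := Nat.choose_eq_zero_of_lt (by omega)
    simp [T, this]
  · apply Nat.eq_of_mul_eq_mul_right
      (Nat.mul_pos (Nat.factorial_pos (m - ℓ)) (Nat.factorial_pos (n - m - 1)))
    have hf1 : Nat.factorial (m - ℓ) = (m - ℓ) * Nat.factorial (m - ℓ - 1) := by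
      rw [Nat.mul_factorial_pred (by omega)]
    have hf2 : Nat.factorial (n - ℓ - 1)
        = (n - ℓ - 1) * Nat.factorial (n - ℓ - 2) := by
      have : n - ℓ - 2 = (n - ℓ - 1) - 1 := by omega
      rw [this, Nat.mul_factorial_pred (by omega)]
    have key2 : T n m (ℓ + 1) * (Nat.factorial (m - ℓ - 1)
        * Nat.factorial (n - m - 1)) = Nat.factorial m * Nat.factorial (n - ℓ - 2) := by
      have := Tfac n m (ℓ + 1) (by omega) h2
      have e1 : m - (ℓ + 1) = m - ℓ - 1 := by omega
      have e2 : n - (ℓ + 1) - 1 = n - ℓ - 2 := by omega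
      rwa [e1, e2] at this
    have key1 := Tfac n m ℓ hl h2
    calc (n - ℓ - 1) * T n m (ℓ + 1) * (Nat.factorial (m - ℓ) * Nat.factorial (n - m - 1))
        = (n - ℓ - 1) * (m - ℓ) * (T n m (ℓ + 1)
          * (Nat.factorial (m - ℓ - 1) * Nat.factorial (n - m - 1))) := by
          rw [hf1]; ring
      _ = (n - ℓ - 1) * (m - ℓ) * (Nat.factorial m * Nat.factorial (n - ℓ - 2)) := by
          rw [key2]
      _ = (m - ℓ) * (Nat.factorial m * Nat.factorial (n - ℓ - 1)) := by
          rw [hf2]; ring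
      _ = (m - ℓ) * T n m ℓ * (Nat.factorial (m - ℓ) * Nat.factorial (n - m - 1)) := by
          rw [← key1]; ring

private lemma key (n m : ℕ) (h2 : m < n) :
    ∑ ℓ ∈ Finset.range (m + 1),
        ℓ * T n m ℓ * (n - m) * Nat.factorial (n - m - 1)
      = ∑ ℓ ∈ Finset.range (m + 1),
          (m - ℓ) * T n m ℓ * Nat.factorial (n - m - 1) := by
  set G : ℕ → ℕ := fun ℓ => ℓ * (n - ℓ) * T n m ℓ * Nat.factorial (n - m - 1) with hG
  have hG0 : G 0 = 0 := by simp [hG]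
  have hGtop : G (m + 1) = 0 := by
    have : Nat.choose m (m + 1) = 0 := Nat.choose_eq_zero_of_lt (by omega)
    simp [hG, T, this]
  have hterm : ∀ ℓ ∈ Finset.range (m + 1),
      ℓ * T n m ℓ * (n - m) * Nat.factorial (n - m - 1) + G (ℓ + 1)
        = (m - ℓ) * T n m ℓ * Nat.factorial (n - m - 1) + G ℓ := by
    intro ℓ hℓ
    have hlm : ℓ ≤ m := by simpa [Nat.lt_succ_iff] using hℓ
    have hstep : (n - ℓ - 1) * T n m (ℓ + 1) = (m - ℓ) * T n m ℓ := step n m ℓ hlm h2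
    have e1 : n - (ℓ + 1) = n - ℓ - 1 := by omega
    have e2 : n - ℓ = (m - ℓ) + (n - m) := by omega
    simp only [hG, e1]
    calc ℓ * T n m ℓ * (n - m) * Nat.factorial (n - m - 1)
          + (ℓ + 1) * (n - ℓ - 1) * T n m (ℓ + 1) * Nat.factorial (n - m - 1)
        = ℓ * T n m ℓ * (n - m) * Nat.factorial (n - m - 1)
          + (ℓ + 1) * ((n - ℓ - 1) * T n m (ℓ + 1)) * Nat.factorial (n - m - 1) := by ring
      _ = ℓ * T n m ℓ * (n - m) * Nat.factorial (n - m - 1)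
          + (ℓ + 1) * ((m - ℓ) * T n m ℓ) * Nat.factorial (n - m - 1) := by rw [hstep]
      _ = (m - ℓ) * T n m ℓ * Nat.factorial (n - m - 1)
          + ℓ * ((m - ℓ) + (n - m)) * T n m ℓ * Nat.factorial (n - m - 1) := by ring
      _ = (m - ℓ) * T n m ℓ * Nat.factorial (n - m - 1)
          + ℓ * (n - ℓ) * T n m ℓ * Nat.factorial (n - m - 1) := by rw [← e2]
  have hsum := Finset.sum_congr rfl hterm
  rw [Finset.sum_add_distrib, Finset.sum_add_distrib] at hsum
  have hshift : ∑ ℓ ∈ Finset.range (m + 1), G (ℓ + 1)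
      = ∑ ℓ ∈ Finset.range (m + 1), G ℓ := by
    have h1 : ∑ ℓ ∈ Finset.range (m + 2), G ℓ
        = (∑ ℓ ∈ Finset.range (m + 1), G (ℓ + 1)) + G 0 := Finset.sum_range_succ' G (m + 1)
    have h2' : ∑ ℓ ∈ Finset.range (m + 2), G ℓ
        = (∑ ℓ ∈ Finset.range (m + 1), G ℓ) + G (m + 1) := Finset.sum_range_succ G (m + 1)
    omega
  rw [hshift] at hsum
  exact Nat.add_right_cancel hsum

/-- The two double sums counting preference lists with exactly `n-1` lucky cars whose
unlucky car fails to park, respectively parks in a non-preferred spot, are equal for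
every `n ≥ 2`. -/
theorem counts_equinumerous (n : ℕ) (hn : 2 ≤ n) :
    ∑ i ∈ Finset.Icc 2 n, ∑ ℓ ∈ Finset.Icc 1 (i - 1),
        ℓ * Nat.choose (i - 1) ℓ * Nat.factorial ℓ
          * Nat.choose (n - ℓ - 1) (i - 1 - ℓ) * Nat.factorial (i - 1 - ℓ)
          * Nat.choose (n - i + 1) (n - i) * Nat.factorial (n - i)
      = ∑ i ∈ Finset.Icc 2 n, ∑ ℓ ∈ Finset.range i,
          (i - 1 - ℓ) * Nat.choose (i - 1) ℓ * Nat.factorial ℓ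
            * Nat.choose (n - ℓ - 1) (i - 1 - ℓ) * Nat.factorial (i - 1 - ℓ)
            * Nat.factorial (n - i) := by
  refine Finset.sum_congr rfl ?_
  intro i hi
  rw [Finset.mem_Icc] at hi
  obtain ⟨m, rfl⟩ : ∃ m, i = m + 1 := ⟨i - 1, by omega⟩
  have hm : m < n := by omega
  have e0 : m + 1 - 1 = m := rfl
  have e1 : n - (m + 1) = n - m - 1 := by omega
  have e2 : n - (m + 1) + 1 = n - m := by omega
  have echoose : Nat.choose (n - m - 1 + 1) (n - m - 1) = n - m := by
    rw [Nat.choose_succ_self_right]; omega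
  simp only [e0, e1, echoose]
  have hLHS : ∑ ℓ ∈ Finset.Icc 1 m,
      ℓ * Nat.choose m ℓ * Nat.factorial ℓ * Nat.choose (n - ℓ - 1) (m - ℓ)
        * Nat.factorial (m - ℓ) * (n - m) * Nat.factorial (n - m - 1)
      = ∑ ℓ ∈ Finset.range (m + 1),
          ℓ * Nat.choose m ℓ * Nat.factorial ℓ * Nat.choose (n - ℓ - 1) (m - ℓ)
            * Nat.factorial (m - ℓ) * (n - m) * Nat.factorial (n - m - 1) := by
    apply Finset.sum_subset
    · intro x hx
      rw [Finset.mem_Icc] at hx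
      rw [Finset.mem_range]; omega
    · intro x hx hx'
      rw [Finset.mem_range] at hx
      rw [Finset.mem_Icc] at hx'
      have : x = 0 := by omega
      simp [this]
  rw [hLHS]
  have := key n m hm
  simp only [T] at this
  calc ∑ ℓ ∈ Finset.range (m + 1),
        ℓ * Nat.choose m ℓ * Nat.factorial ℓ * Nat.choose (n - ℓ - 1) (m - ℓ)
          * Nat.factorial (m - ℓ) * (n - m) * Nat.factorial (n - m - 1)
      = ∑ ℓ ∈ Finset.range (m + 1),
          ℓ * (Nat.choose m ℓ * Nat.factorial ℓ * Nat.choose (n - ℓ - 1) (m - ℓ)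
            * Nat.factorial (m - ℓ)) * (n - m) * Nat.factorial (n - m - 1) := by
        refine Finset.sum_congr rfl fun ℓ _ => by ring
    _ = ∑ ℓ ∈ Finset.range (m + 1),
          (m - ℓ) * (Nat.choose m ℓ * Nat.factorial ℓ * Nat.choose (n - ℓ - 1) (m - ℓ)
            * Nat.factorial (m - ℓ)) * Nat.factorial (n - m - 1) := this
    _ = ∑ ℓ ∈ Finset.range (m + 1),
          (m - ℓ) * Nat.choose m ℓ * Nat.factorial ℓ * Nat.choose (n - ℓ - 1) (m - ℓ)
            * Nat.factorial (m - ℓ) * Nat.factorial (n - m - 1) := by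
        refine Finset.sum_congr rfl fun ℓ _ => by ring
end
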